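/- arXiv:2201.03235 — 8 statements merged into one kernel-verified Lean document; each statement's English description precedes it below -/
import Mathlib

section
/- Let A ∈ ℝ^{m×n} be a nonzero matrix, y ∈ ℝᵐ, μ, γ > 0, M := range(Aᵀ) with orthogonal projection P_M, and define F(x) := ½‖Ax − y‖₂² − μ·(⁽γ⁾‖·‖₁)(P_M x) for x ∈ ℝⁿ. Then F is convex on ℝⁿ if and only if μ ≤ γ·λ_min^{++}(AᵀA), where λ_min^{++}(AᵀA) denotes the smallest strictly positive eigenvalue of AᵀA. -/
/-!
Let `T` be the linear map of `A`, `M = range Tᵀ = (ker T)ᗮ` and `P` the projection onto `M`, so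
that `T ∘ P = T`. The function `‖x‖²/(2γ) - ᵞ‖·‖₁(x)` is a supremum of affine functions, hence
convex, so `F` is the quadratic `½‖Tx - y‖² - (μ/2γ)‖Px‖²` plus a convex function of `Px`, and
this quadratic is convex iff `(μ/γ)‖u‖² ≤ ‖Tu‖²` on `M`. Conversely, on the box `‖x‖_∞ ≤ γ` the
envelope is exactly `‖x‖²/(2γ)`, so midpoint convexity of `F` between `±u` for small `u ∈ M`
forces the same inequality, which then scales to all of `M`. Expanding in an eigenbasis of `TᵀT`,
whose null directions are orthogonal to `M`, this inequality holds iff `μ/γ` is at most every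
positive eigenvalue of `TᵀT`.
-/

open Matrix

noncomputable section

def l1norm {n : ℕ} (x : EuclideanSpace ℝ (Fin n)) : ℝ := ∑ i, |x i|

def moreauEnv {n : ℕ} (γ : ℝ) (f : EuclideanSpace ℝ (Fin n) → ℝ)
    (x : EuclideanSpace ℝ (Fin n)) : ℝ :=
  ⨅ y : EuclideanSpace ℝ (Fin n), (f y + ‖x - y‖ ^ 2 / (2 * γ))

open scoped RealInnerProductSpace

section MoreauEnvelope

variable {n : ℕ} {γ : ℝ}

lemma l1norm_nonneg (x : EuclideanSpace ℝ (Fin n)) : 0 ≤ l1norm x :=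
  Finset.sum_nonneg fun _ _ => abs_nonneg _

lemma bddBelow_range_l1norm : BddBelow (Set.range (l1norm (n := n))) :=
  ⟨0, by rintro _ ⟨y, rfl⟩; exact l1norm_nonneg y⟩

lemma moreauEnv_le {f : EuclideanSpace ℝ (Fin n) → ℝ} (hf : BddBelow (Set.range f))
    (hγ : 0 < γ) (x y : EuclideanSpace ℝ (Fin n)) :
    moreauEnv γ f x ≤ f y + ‖x - y‖ ^ 2 / (2 * γ) := by
  obtain ⟨c, hc⟩ := hf
  refine ciInf_le ⟨c, ?_⟩ y
  rintro _ ⟨z, rfl⟩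
  have := hc ⟨z, rfl⟩
  have : 0 ≤ ‖x - z‖ ^ 2 / (2 * γ) := by positivity
  linarith

theorem convexOn_sq_norm_div_sub_moreauEnv {f : EuclideanSpace ℝ (Fin n) → ℝ}
    (hf : BddBelow (Set.range f)) (hγ : 0 < γ) :
    ConvexOn ℝ Set.univ fun x => ‖x‖ ^ 2 / (2 * γ) - moreauEnv γ f x := by
  set φ := fun x : EuclideanSpace ℝ (Fin n) => ‖x‖ ^ 2 / (2 * γ) - moreauEnv γ f x
  set h := fun y x : EuclideanSpace ℝ (Fin n) => ⟪x, y⟫ / γ - f y - ‖y‖ ^ 2 / (2 * γ)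
  have expand : ∀ x y, ‖x‖ ^ 2 / (2 * γ) - (f y + ‖x - y‖ ^ 2 / (2 * γ)) = h y x := by
    intro x y
    simp only [h]
    rw [norm_sub_sq_real]
    field_simp
    ring
  have h_le : ∀ x y, h y x ≤ φ x := fun x y => by
    have := moreauEnv_le hf hγ x y
    have := expand x y
    simp only [φ]
    linarith
  refine ⟨convex_univ, fun x₁ _ x₂ _ a b ha hb hab => ?_⟩
  change φ _ ≤ a * φ x₁ + b * φ x₂
  rw [sub_le_iff_le_add', ← sub_le_iff_le_add]
  refine le_ciInf fun y => ?_
  rw [sub_le_iff_le_add', ← sub_le_iff_le_add, expand]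
  calc h y (a • x₁ + b • x₂) = a * h y x₁ + b * h y x₂ := by
        simp only [h, inner_add_left, real_inner_smul_left]
        linear_combination (f y + ‖y‖ ^ 2 / (2 * γ)) * hab
    _ ≤ a * φ x₁ + b * φ x₂ := by gcongr <;> exact h_le _ y

lemma inner_le_mul_l1norm {x : EuclideanSpace ℝ (Fin n)} (hx : ∀ i, |x i| ≤ γ)
    (y : EuclideanSpace ℝ (Fin n)) : ⟪x, y⟫ ≤ γ * l1norm y := by
  rw [PiLp.inner_apply, l1norm, Finset.mul_sum]
  refine Finset.sum_le_sum fun i _ => ?_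
  calc ⟪x i, y i⟫ = y i * x i := rfl
    _ ≤ |y i| * |x i| := by rw [← abs_mul]; exact le_abs_self _
    _ ≤ γ * |y i| := by rw [mul_comm]; exact mul_le_mul_of_nonneg_right (hx i) (abs_nonneg _)

-- On the box `‖x‖_∞ ≤ γ` the proximal point of `‖·‖₁` at `x` is `0`.
theorem moreauEnv_l1norm_of_abs_le (hγ : 0 < γ) {x : EuclideanSpace ℝ (Fin n)}
    (hx : ∀ i, |x i| ≤ γ) : moreauEnv γ l1norm x = ‖x‖ ^ 2 / (2 * γ) := by
  refine le_antisymm (by simpa [l1norm] using moreauEnv_le bddBelow_range_l1norm hγ x 0)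
    (le_ciInf fun y => ?_)
  rw [norm_sub_sq_real, div_le_iff₀ (by positivity), add_mul, div_mul_cancel₀ _ (by positivity)]
  nlinarith [inner_le_mul_l1norm hx y, l1norm_nonneg y, sq_nonneg ‖y‖]

end MoreauEnvelope

section Quadratic

variable {E F G : Type*} [NormedAddCommGroup E] [InnerProductSpace ℝ E]
  [NormedAddCommGroup F] [InnerProductSpace ℝ F] [NormedAddCommGroup G] [InnerProductSpace ℝ G]

lemma norm_smul_add_smul_sq {a b : ℝ} (hab : a + b = 1) (u v : E) :
    ‖a • u + b • v‖ ^ 2 = a * ‖u‖ ^ 2 + b * ‖v‖ ^ 2 - a * b * ‖u - v‖ ^ 2 := by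
  rw [norm_add_sq_real, norm_sub_sq_real, norm_smul, norm_smul, real_inner_smul_left,
    real_inner_smul_right, mul_pow, mul_pow, Real.norm_eq_abs, Real.norm_eq_abs, sq_abs, sq_abs]
  obtain rfl := eq_sub_of_add_eq hab
  ring

theorem convexOn_norm_sub_sq_sub_mul_norm_sq (T : E →ₗ[ℝ] F) (P : E →ₗ[ℝ] G) (y : F) {k : ℝ}
    (h : ∀ u, k * ‖P u‖ ^ 2 ≤ ‖T u‖ ^ 2) :
    ConvexOn ℝ Set.univ fun x => ‖T x - y‖ ^ 2 - k * ‖P x‖ ^ 2 := by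
  refine ⟨convex_univ, fun x₁ _ x₂ _ a b ha hb hab => ?_⟩
  have hT : T (a • x₁ + b • x₂) - y = a • (T x₁ - y) + b • (T x₂ - y) := by
    rw [map_add, map_smul, map_smul]
    linear_combination (norm := module) hab • y
  have hdiff : (T x₁ - y) - (T x₂ - y) = T (x₁ - x₂) := by rw [map_sub]; abel
  simp only [smul_eq_mul]
  rw [hT, map_add, map_smul, map_smul, norm_smul_add_smul_sq hab, norm_smul_add_smul_sq hab,
    hdiff, ← map_sub]
  nlinarith [mul_nonneg (mul_nonneg ha hb) (sub_nonneg.2 (h (x₁ - x₂)))]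

end Quadratic

namespace LinearMap

variable {E F : Type*} [NormedAddCommGroup E] [InnerProductSpace ℝ E] [FiniteDimensional ℝ E]
  [NormedAddCommGroup F] [InnerProductSpace ℝ F] [FiniteDimensional ℝ F] (T : E →ₗ[ℝ] F)

lemma norm_apply_sq_eq_inner_adjoint_apply (u : E) : ‖T u‖ ^ 2 = ⟪T.adjoint (T u), u⟫ := by
  rw [adjoint_inner_left, real_inner_self_eq_norm_sq]

lemma eigenvalues_adjoint_comp_self_eq_norm_sq (i : Fin (Module.finrank ℝ E)) :
    T.isSymmetric_adjoint_comp_self.eigenvalues rfl i =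
      ‖T (T.isSymmetric_adjoint_comp_self.eigenvectorBasis rfl i)‖ ^ 2 := by
  set e := T.isSymmetric_adjoint_comp_self.eigenvectorBasis rfl
  have he := T.isSymmetric_adjoint_comp_self.apply_eigenvectorBasis rfl i
  rw [norm_apply_sq_eq_inner_adjoint_apply, ← comp_apply, he, real_inner_smul_left,
    real_inner_self_eq_norm_sq, e.orthonormal.1 i]
  simp

theorem exists_pos_eigenvector_adjoint_comp_self (hT : T ≠ 0) :
    ∃ t : ℝ, 0 < t ∧ ∃ v ≠ 0, T.adjoint (T v) = t • v := by
  set hS := T.isSymmetric_adjoint_comp_self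
  by_contra! h
  apply hT
  refine (hS.eigenvectorBasis rfl).toBasis.ext fun i => ?_
  have hle : hS.eigenvalues rfl i ≤ 0 := by
    by_contra! hpos
    exact h _ hpos _ ((hS.eigenvectorBasis rfl).orthonormal.ne_zero i)
      (hS.apply_eigenvectorBasis rfl i)
  rw [eigenvalues_adjoint_comp_self_eq_norm_sq] at hle
  simpa using hle

theorem mul_norm_sq_le_norm_apply_sq_iff (Λ : ℝ) :
    (∀ u ∈ range T.adjoint, Λ * ‖u‖ ^ 2 ≤ ‖T u‖ ^ 2) ↔
      ∀ t : ℝ, 0 < t → ∀ v ≠ 0, T.adjoint (T v) = t • v → Λ ≤ t := by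
  constructor
  · intro h t ht v hv hvt
    have hmem : v ∈ range T.adjoint :=
      ⟨T (t⁻¹ • v), by rw [map_smul, map_smul, hvt, inv_smul_smul₀ ht.ne']⟩
    have := h v hmem
    rw [norm_apply_sq_eq_inner_adjoint_apply, hvt, real_inner_smul_left,
      real_inner_self_eq_norm_sq] at this
    exact le_of_mul_le_mul_right this (by positivity)
  · rintro h _ ⟨w, rfl⟩
    set hS := T.isSymmetric_adjoint_comp_self
    set e := hS.eigenvectorBasis rfl
    have hcoord : ∀ i, Λ * (⟪T.adjoint w, e i⟫ * ⟪e i, T.adjoint w⟫)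
        ≤ ⟪T.adjoint (T (T.adjoint w)), e i⟫ * ⟪e i, T.adjoint w⟫ := by
      intro i
      rw [← comp_apply, hS (T.adjoint w) (e i), hS.apply_eigenvectorBasis rfl i,
        real_inner_smul_right, real_inner_comm (e i), mul_assoc]
      rcases (eigenvalues_adjoint_comp_self_eq_norm_sq T i ▸ sq_nonneg _ :
        0 ≤ hS.eigenvalues rfl i).eq_or_lt with hzero | hpos
      · have : T (e i) = 0 := by
          rw [eigenvalues_adjoint_comp_self_eq_norm_sq] at hzero
          simpa using hzero.symm
        simp [adjoint_inner_right, this]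
      · exact mul_le_mul_of_nonneg_right
          (h _ hpos _ (e.orthonormal.ne_zero i) (hS.apply_eigenvectorBasis rfl i))
          (mul_self_nonneg _)
    rw [← real_inner_self_eq_norm_sq, norm_apply_sq_eq_inner_adjoint_apply,
      ← e.sum_inner_mul_inner, ← e.sum_inner_mul_inner, Finset.mul_sum]
    exact Finset.sum_le_sum fun i _ => hcoord i

lemma apply_starProjection_range_adjoint (x : E) :
    T ((range T.adjoint).starProjection x) = T x := by
  have hker : (range T.adjoint)ᗮ ≤ ker T := by
    rw [← orthogonal_ker, Submodule.orthogonal_orthogonal]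
  have h := hker ((range T.adjoint).sub_starProjection_mem_orthogonal x)
  rw [mem_ker, map_sub, sub_eq_zero] at h
  exact h.symm

end LinearMap

section Convexity

variable {n : ℕ} {F : Type*} [NormedAddCommGroup F] [InnerProductSpace ℝ F]
  [FiniteDimensional ℝ F] (T : EuclideanSpace ℝ (Fin n) →ₗ[ℝ] F) (y : F) {μ γ : ℝ}

lemma mul_norm_sq_le_of_convexOn (hγ : 0 < γ)
    (hconv : ConvexOn ℝ Set.univ fun x => ‖T x - y‖ ^ 2 / 2 -
      μ * moreauEnv γ l1norm ((LinearMap.range T.adjoint).starProjection x))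
    {u : EuclideanSpace ℝ (Fin n)} (hu : u ∈ LinearMap.range T.adjoint) (hbox : ∀ i, |u i| ≤ γ) :
    μ / γ * ‖u‖ ^ 2 ≤ ‖T u‖ ^ 2 := by
  have hmid := hconv.2 (Set.mem_univ u) (Set.mem_univ (-u)) (by norm_num : (0 : ℝ) ≤ 1 / 2)
    (by norm_num : (0 : ℝ) ≤ 1 / 2) (by norm_num)
  have hzero : (1 / 2 : ℝ) • u + (1 / 2 : ℝ) • -u = 0 := by module
  have hbox_neg : ∀ i, |(-u) i| ≤ γ := fun i => by simpa using hbox i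
  have hbox_zero : ∀ i, |(0 : EuclideanSpace ℝ (Fin n)) i| ≤ γ := fun _ => by simpa using hγ.le
  simp only [hzero, map_zero, map_neg, Submodule.starProjection_eq_self_iff.2 hu, smul_eq_mul,
    moreauEnv_l1norm_of_abs_le hγ hbox, moreauEnv_l1norm_of_abs_le hγ hbox_neg,
    moreauEnv_l1norm_of_abs_le hγ hbox_zero, zero_sub, norm_neg, norm_zero] at hmid
  rw [show -T u - y = -(T u + y) by abel, norm_neg, norm_add_sq_real, norm_sub_sq_real] at hmid
  rw [div_mul_eq_mul_div, div_le_iff₀ hγ]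
  field_simp at hmid
  linarith

theorem convexOn_norm_sub_sq_sub_moreauEnv_iff (hμ : 0 < μ) (hγ : 0 < γ) :
    (ConvexOn ℝ Set.univ fun x => ‖T x - y‖ ^ 2 / 2 -
      μ * moreauEnv γ l1norm ((LinearMap.range T.adjoint).starProjection x)) ↔
      ∀ u ∈ LinearMap.range T.adjoint, μ / γ * ‖u‖ ^ 2 ≤ ‖T u‖ ^ 2 := by
  set P := (LinearMap.range T.adjoint).starProjection
  constructor
  · intro hconv u hu
    rcases eq_or_ne u 0 with rfl | hu0
    · simp
    have hnorm : 0 < ‖u‖ := norm_pos_iff.2 hu0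
    set s := γ / ‖u‖
    have hs : 0 < s := by positivity
    have hbox : ∀ i, |(s • u) i| ≤ γ := fun i => by
      rw [PiLp.smul_apply, smul_eq_mul, abs_mul, abs_of_pos hs]
      calc s * |u i| ≤ s * ‖u‖ := by gcongr; exact PiLp.norm_apply_le u i
        _ = γ := div_mul_cancel₀ γ hnorm.ne'
    have := mul_norm_sq_le_of_convexOn T y hγ hconv (Submodule.smul_mem _ s hu) hbox
    rw [map_smul, norm_smul, norm_smul, Real.norm_of_nonneg hs.le, mul_pow, mul_pow,
      mul_left_comm] at this
    exact le_of_mul_le_mul_left this (by positivity)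
  · intro h
    have hq := convexOn_norm_sub_sq_sub_mul_norm_sq T P.toLinearMap y (k := μ / γ) fun u => by
      simpa [P, LinearMap.apply_starProjection_range_adjoint] using
        h _ ((LinearMap.range T.adjoint).starProjection_apply_mem u)
    have hφ := convexOn_sq_norm_div_sub_moreauEnv (bddBelow_range_l1norm (n := n)) hγ
    refine ((hq.smul (by norm_num : (0 : ℝ) ≤ 1 / 2)).add ((hφ.smul hμ.le).comp_linearMap
      P.toLinearMap)).congr fun x _ => ?_
    simp only [Pi.add_apply, Function.comp_apply, smul_eq_mul, ContinuousLinearMap.coe_coe]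
    field_simp
    ring

end Convexity

lemma Matrix.toEuclideanLin_transpose_eq_adjoint {m n : Type*} [Fintype m] [DecidableEq m]
    [Fintype n] [DecidableEq n] (A : Matrix m n ℝ) :
    toEuclideanLin Aᵀ = (toEuclideanLin A).adjoint := by
  rw [← conjTranspose_eq_transpose_of_trivial, toEuclideanLin_conjTranspose_eq_adjoint]

lemma Matrix.transpose_mul_self_mulVec_eq_smul_iff {m n : Type*} [Fintype m] [DecidableEq m]
    [Fintype n] [DecidableEq n] (A : Matrix m n ℝ) (t : ℝ) (v : n → ℝ) :
    (Aᵀ * A) *ᵥ v = t • v ↔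
      (toEuclideanLin A).adjoint (toEuclideanLin A (WithLp.toLp 2 v)) = t • WithLp.toLp 2 v := by
  rw [← toEuclideanLin_transpose_eq_adjoint, ← mulVec_mulVec]
  simp [← WithLp.toLp_smul]

/-- Proposition 2 of the paper.  The smooth part
`F(x) = ½‖Ax − y‖₂² − μ·(ᵞ‖·‖₁)(P_M x)` of the debiased sparse modeling objective
is convex on ℝⁿ if and only if `μ ≤ γ·λ_min^{++}(AᵀA)`, where `λ_min^{++}` is the
smallest strictly positive eigenvalue of `AᵀA`. -/
theorem pmc_convexity_condition {m n : ℕ} (A : Matrix (Fin m) (Fin n) ℝ) (hA : A ≠ 0)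
    (y : EuclideanSpace ℝ (Fin m)) (μ γ : ℝ) (hμ : 0 < μ) (hγ : 0 < γ) :
    ConvexOn ℝ Set.univ (fun x : EuclideanSpace ℝ (Fin n) =>
        ‖Matrix.toEuclideanLin A x - y‖ ^ 2 / 2 -
          μ * moreauEnv γ l1norm
            ((Submodule.orthogonalProjection (LinearMap.range (Matrix.toEuclideanLin Aᵀ)) x :
              EuclideanSpace ℝ (Fin n))))
      ↔ μ ≤ γ * sInf {t : ℝ | 0 < t ∧ ∃ v : Fin n → ℝ, v ≠ 0 ∧ (Aᵀ * A).mulVec v = t • v} := by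
  set T := toEuclideanLin A
  set S := {t : ℝ | 0 < t ∧ ∃ v ≠ 0, T.adjoint (T v) = t • v}
  have hS : {t : ℝ | 0 < t ∧ ∃ v : Fin n → ℝ, v ≠ 0 ∧ (Aᵀ * A).mulVec v = t • v} = S :=
    Set.ext fun t => and_congr_right fun _ => by
      simp only [transpose_mul_self_mulVec_eq_smul_iff]
      exact ⟨fun ⟨v, hv, h⟩ => ⟨_, by simpa using hv, h⟩,
        fun ⟨v, hv, h⟩ => ⟨v.ofLp, by simpa using hv, h⟩⟩
  have hne : S.Nonempty := T.exists_pos_eigenvector_adjoint_comp_self (by simpa [T] using hA)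
  simp only [Submodule.coe_orthogonalProjectionOnto_apply, toEuclideanLin_transpose_eq_adjoint]
  rw [convexOn_norm_sub_sq_sub_moreauEnv_iff T y hμ hγ, T.mul_norm_sq_le_norm_apply_sq_iff, hS,
    ← div_le_iff₀' hγ, le_csInf_iff ⟨0, fun _ ht => ht.1.le⟩ hne]
  exact ⟨fun h t ⟨ht, v, hv, hvt⟩ => h t ht v hv hvt,
    fun h t ht v hv hvt => h t ⟨ht, v, hv, hvt⟩⟩
end
end

section
/- In the LiMES setup, if condition (♠) holds, i.e., M₁*M₁ − μ M₂*𝓛*D²𝓛M₂ is positive semidefinite, then the smooth part F is a proper lower-semicontinuous convex function on X. -/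
open scoped RealInnerProductSpace

noncomputable section

lemma aux_le_of_forall_real_lt {a b : EReal} (h : ∀ M : ℝ, (M:EReal) < a → (M:EReal) ≤ b) : a ≤ b := by
  by_contra hab
  push_neg at hab
  obtain ⟨M, hbM, hMa⟩ := EReal.exists_between_coe_real hab
  exact absurd (h M hMa) (not_le.2 hbM)

lemma aux_norm_combo {E : Type*} [NormedAddCommGroup E] [InnerProductSpace ℝ E]
    (u w : E) (t s : ℝ) (h : t + s = 1) :
    ‖t • u + s • w‖^2 = t*‖u‖^2 + s*‖w‖^2 - t*s*‖u - w‖^2 := by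
  have h1 : ‖t • u + s • w‖^2 = ⟪t • u + s • w, t • u + s • w⟫ := (real_inner_self_eq_norm_sq _).symm
  have h2 : ‖u‖^2 = ⟪u, u⟫ := (real_inner_self_eq_norm_sq _).symm
  have h3 : ‖w‖^2 = ⟪w, w⟫ := (real_inner_self_eq_norm_sq _).symm
  have h4 : ‖u - w‖^2 = ⟪u - w, u - w⟫ := (real_inner_self_eq_norm_sq _).symm
  rw [h1, h2, h3, h4]
  simp only [inner_add_left, inner_add_right, inner_sub_left, inner_sub_right,
    inner_smul_left, inner_smul_right, conj_trivial]
  have hc : ⟪w, u⟫ = ⟪u, w⟫ := real_inner_comm u w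
  rw [hc]
  have hs : s = 1 - t := by linarith
  subst hs
  ring

lemma aux_convexOn_quad {X Y Z : Type*}
    [NormedAddCommGroup X] [InnerProductSpace ℝ X]
    [NormedAddCommGroup Y] [InnerProductSpace ℝ Y]
    [NormedAddCommGroup Z] [InnerProductSpace ℝ Z]
    (A : X →ₗ[ℝ] Y) (B : X →ₗ[ℝ] Z) (a : Y) (b : Z) (μ : ℝ) (hμ : 0 ≤ μ)
    (h : ∀ x, μ * ‖B x‖^2 ≤ ‖A x‖^2) :
    ConvexOn ℝ Set.univ (fun x => ‖A x + a‖^2/2 - μ * ‖B x + b‖^2/2) := by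
  refine ⟨convex_univ, fun x _ y _ t s ht hs hts => ?_⟩
  have hA : A (t • x + s • y) + a = t • (A x + a) + s • (A y + a) := by
    have : a = (t + s) • a := by rw [hts, one_smul]
    conv_lhs => rw [this]
    simp only [map_add, map_smul, smul_add, add_smul]
    abel
  have hB : B (t • x + s • y) + b = t • (B x + b) + s • (B y + b) := by
    have : b = (t + s) • b := by rw [hts, one_smul]
    conv_lhs => rw [this]
    simp only [map_add, map_smul, smul_add, add_smul]
    abel
  have eA : ‖A (t • x + s • y) + a‖^2
      = t*‖A x + a‖^2 + s*‖A y + a‖^2 - t*s*‖A (x - y)‖^2 := by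
    rw [hA, aux_norm_combo _ _ _ _ hts]
    congr 3
    rw [map_sub]; abel
  have eB : ‖B (t • x + s • y) + b‖^2
      = t*‖B x + b‖^2 + s*‖B y + b‖^2 - t*s*‖B (x - y)‖^2 := by
    rw [hB, aux_norm_combo _ _ _ _ hts]
    congr 3
    rw [map_sub]; abel
  simp only [smul_eq_mul]
  rw [eA, eB]
  have hkey := h (x - y)
  nlinarith [mul_nonneg ht hs, mul_nonneg (mul_nonneg ht hs) (sub_nonneg.2 hkey)]

lemma aux_affine_minorant {Z : Type*}
    [NormedAddCommGroup Z] [InnerProductSpace ℝ Z] [FiniteDimensional ℝ Z]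
    (Ψ : Z → EReal) (hΨbot : ∀ z, Ψ z ≠ ⊥) (hΨtop : ∃ z, Ψ z ≠ ⊤)
    (hΨlsc : LowerSemicontinuous Ψ)
    (hΨconv : Convex ℝ {p : Z × ℝ | Ψ p.1 ≤ (p.2 : EReal)}) :
    ∃ (g : Z →L[ℝ] ℝ) (C : ℝ), ∀ z, ((C - g z : ℝ) : EReal) ≤ Ψ z := by
  obtain ⟨z₀, hz₀⟩ := hΨtop
  set ψ₀ : ℝ := (Ψ z₀).toReal with hψ₀def
  have hψ₀ : Ψ z₀ = (ψ₀ : EReal) := (EReal.coe_toReal hz₀ (hΨbot z₀)).symm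
  have hclosed : IsClosed {p : Z × ℝ | Ψ p.1 ≤ (p.2 : EReal)} := by
    have h1 : IsClosed {p : Z × EReal | Ψ p.1 ≤ p.2} := hΨlsc.isClosed_epigraph
    have h2 : Continuous (fun p : Z × ℝ => (p.1, (p.2 : EReal))) :=
      continuous_fst.prodMk (continuous_coe_real_ereal.comp continuous_snd)
    exact h1.preimage h2
  have hp₀ : (z₀, ψ₀ - 1) ∉ {p : Z × ℝ | Ψ p.1 ≤ (p.2 : EReal)} := by
    simp only [Set.mem_setOf_eq, hψ₀, EReal.coe_le_coe_iff]
    intro hcon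
    linarith
  obtain ⟨f, u, hfu, hepi⟩ := geometric_hahn_banach_point_closed hΨconv hclosed hp₀
  set b : ℝ := f (0, 1) with hbdef
  have hsplit : ∀ (z : Z) (t : ℝ), f (z, t) = f (z, 0) + t * b := by
    intro z t
    have : (z, t) = (z, (0:ℝ)) + t • ((0:Z), (1:ℝ)) := by
      simp [Prod.ext_iff]
    rw [this, map_add, map_smul, smul_eq_mul]
  have hmem : ∀ z : Z, Ψ z ≠ ⊤ → u < f (z, 0) + (Ψ z).toReal * b := by
    intro z hz
    have : (z, (Ψ z).toReal) ∈ {p : Z × ℝ | Ψ p.1 ≤ (p.2 : EReal)} := by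
      simp only [Set.mem_setOf_eq]
      rw [EReal.coe_toReal hz (hΨbot z)]
    have := hepi _ this
    rwa [hsplit] at this
  have hb : 0 < b := by
    have h1 := hmem z₀ hz₀
    rw [hsplit] at hfu
    rw [← hψ₀def] at h1
    nlinarith
  refine ⟨(1/b) • (f.comp (ContinuousLinearMap.inl ℝ Z ℝ)), u/b, fun z => ?_⟩
  by_cases hz : Ψ z = ⊤
  · rw [hz]; exact le_top
  · rw [← EReal.coe_toReal hz (hΨbot z), EReal.coe_le_coe_iff]
    have h1 := hmem z hz
    simp only [ContinuousLinearMap.smul_apply, ContinuousLinearMap.comp_apply,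
      ContinuousLinearMap.inl_apply, smul_eq_mul]
    rw [div_sub' (ne_of_gt hb), div_le_iff₀ hb]
    have hbb : b * (1/b * f (z, 0)) = f (z, 0) := by field_simp
    nlinarith [hbb]

lemma aux_D_lower_bound {Z : Type*}
    [NormedAddCommGroup Z] [InnerProductSpace ℝ Z] [FiniteDimensional ℝ Z]
    (D : Z →ₗ[ℝ] Z) (hDpd : ∀ z : Z, z ≠ 0 → 0 < ⟪D z, z⟫) :
    ∃ c : ℝ, 0 < c ∧ ∀ z, c * ‖z‖ ≤ ‖D z‖ := by
  have hinj : Function.Injective D := by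
    intro x y hxy
    by_contra hne
    have hz : x - y ≠ 0 := sub_ne_zero.2 hne
    have := hDpd (x - y) hz
    rw [map_sub, hxy, sub_self] at this
    simp at this
  have hbij : Function.Bijective D := ⟨hinj, (LinearMap.injective_iff_surjective).1 hinj⟩
  let e : Z ≃ₗ[ℝ] Z := LinearEquiv.ofBijective D hbij
  let ec : Z ≃L[ℝ] Z := e.toContinuousLinearEquiv
  obtain ⟨K, hK⟩ : ∃ K : NNReal, AntilipschitzWith K ec := ⟨_, ec.antilipschitz⟩
  refine ⟨1/((K:ℝ)+1), by positivity, fun z => ?_⟩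
  have h1 : dist z 0 ≤ (K:ℝ) * dist (ec z) (ec 0) := hK.le_mul_dist z 0
  have h2 : (ec : Z → Z) z = D z := rfl
  have h3 : (ec : Z → Z) 0 = 0 := by simp
  rw [h2, h3, dist_zero_right, dist_zero_right] at h1
  rw [div_mul_eq_mul_div, div_le_iff₀ (by positivity)]
  nlinarith [norm_nonneg (D z), norm_nonneg z]

lemma aux_sup_rep {ι : Type*} (Ψ : ι → EReal) (hbot : ∀ v, Ψ v ≠ ⊥) (hne : ∃ v, Ψ v ≠ ⊤)
    (β : ι → ℝ) (r μ : ℝ) (hμ : 0 < μ) :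
    (r : EReal) - (μ : EReal) * ⨅ v, (Ψ v + ((β v : ℝ) : EReal))
      = ⨆ v : {v // Ψ v ≠ ⊤}, ((r - μ * ((Ψ v.1).toReal + β v.1) : ℝ) : EReal) := by
  obtain ⟨v₀, hv₀⟩ := hne
  set I : EReal := ⨅ v, (Ψ v + ((β v : ℝ) : EReal)) with hIdef
  -- each term is the coercion of a real for v in the domain
  have hterm : ∀ v, Ψ v ≠ ⊤ → Ψ v + ((β v : ℝ) : EReal) = (((Ψ v).toReal + β v : ℝ) : EReal) := by
    intro v hv
    rw [← EReal.coe_toReal hv (hbot v), ← EReal.coe_add, EReal.toReal_coe]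
  have hInetop : I ≠ ⊤ := by
    intro htop
    have h1 : I ≤ Ψ v₀ + ((β v₀ : ℝ) : EReal) := iInf_le _ v₀
    rw [htop, hterm v₀ hv₀, top_le_iff] at h1
    exact EReal.coe_ne_top _ h1
  apply le_antisymm
  · -- ≤ : use the density argument
    apply aux_le_of_forall_real_lt
    intro M hM
    -- first derive I < ((r - M)/μ : EReal)
    have hIlt : I < (((r - M)/μ : ℝ) : EReal) := by
      rcases eq_or_ne I ⊥ with hI | hI
      · rw [hI]; exact bot_lt_iff_ne_bot.2 (EReal.coe_ne_bot _)
      · lift I to ℝ using ⟨hInetop, hI⟩ with i hi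
        rw [← EReal.coe_mul, ← EReal.coe_sub, EReal.coe_lt_coe_iff] at hM
        rw [EReal.coe_lt_coe_iff, lt_div_iff₀ hμ]
        linarith
    obtain ⟨v, hv⟩ := iInf_lt_iff.1 hIlt
    have hvtop : Ψ v ≠ ⊤ := by
      intro h
      rw [h, EReal.top_add_of_ne_bot (EReal.coe_ne_bot _)] at hv
      exact absurd hv (by simp)
    rw [hterm v hvtop, EReal.coe_lt_coe_iff, lt_div_iff₀ hμ] at hv
    refine le_trans ?_ (le_iSup _ ⟨v, hvtop⟩)
    rw [EReal.coe_le_coe_iff]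
    nlinarith
  · -- ≥ : each candidate is below
    apply iSup_le
    rintro ⟨v, hv⟩
    have hle : I ≤ (((Ψ v).toReal + β v : ℝ) : EReal) := by
      rw [← hterm v hv]; exact iInf_le _ v
    rcases eq_or_ne I ⊥ with hI | hI
    · rw [hI]
      have : (μ : EReal) * (⊥ : EReal) = ⊥ := by
        rw [mul_comm]
        exact EReal.bot_mul_coe_of_pos hμ
      rw [this, EReal.coe_sub_bot]
      exact le_top
    · lift I to ℝ using ⟨hInetop, hI⟩ with i hi
      rw [EReal.coe_le_coe_iff] at hle
      rw [← EReal.coe_mul, ← EReal.coe_sub, EReal.coe_le_coe_iff]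
      nlinarith


/-- Proposition 5(a) of the paper.  In the LiMES setup, if condition
(♠) holds — `M₁*M₁ − μM₂*𝓛*D²𝓛M₂ ⪰ O`, expressed (using self-adjointness of `D`) as
`μ‖D𝓛M₂x‖² ≤ ‖M₁x‖²` for all `x` — then the smooth part
`F(x) = ½‖𝒜₁x‖² − μ·inf_v [Ψ(v) + ½‖D(𝓛𝒜₂x − v)‖²]` is a proper lower-semicontinuous
convex function on `X` (convexity expressed via the epigraph). -/
theorem limes_smooth_part_convex_of_spade
    {X Y Z : Type*}
    [NormedAddCommGroup X] [InnerProductSpace ℝ X] [FiniteDimensional ℝ X]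
    [NormedAddCommGroup Y] [InnerProductSpace ℝ Y] [FiniteDimensional ℝ Y]
    [NormedAddCommGroup Z] [InnerProductSpace ℝ Z] [FiniteDimensional ℝ Z]
    (M₁ : X →ₗ[ℝ] Y) (hM₁ : M₁ ≠ 0) (M₂ : X →ₗ[ℝ] Z) (hM₂ : M₂ ≠ 0)
    (c₁ : Y) (c₂ : Z) (L : Z →ₗ[ℝ] Z) (hL : L ≠ 0)
    (D : Z →ₗ[ℝ] Z) (hDsa : ∀ u v : Z, ⟪D u, v⟫ = ⟪u, D v⟫)
    (hDpd : ∀ z : Z, z ≠ 0 → 0 < ⟪D z, z⟫)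
    (μ : ℝ) (hμ : 0 < μ)
    (Ψ : Z → EReal) (hΨbot : ∀ z, Ψ z ≠ ⊥) (hΨtop : ∃ z, Ψ z ≠ ⊤)
    (hΨlsc : LowerSemicontinuous Ψ)
    (hΨconv : Convex ℝ {p : Z × ℝ | Ψ p.1 ≤ (p.2 : EReal)})
    (hspade : ∀ x : X, μ * ‖D (L (M₂ x))‖ ^ 2 ≤ ‖M₁ x‖ ^ 2) :
    (∀ x : X,
        (((‖M₁ x + c₁‖ ^ 2 / 2 : ℝ) : EReal) -
          (μ : EReal) * ⨅ v : Z, (Ψ v + ((‖D (L (M₂ x + c₂) - v)‖ ^ 2 / 2 : ℝ) : EReal)))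
        ≠ ⊥) ∧
    (∃ x : X,
        (((‖M₁ x + c₁‖ ^ 2 / 2 : ℝ) : EReal) -
          (μ : EReal) * ⨅ v : Z, (Ψ v + ((‖D (L (M₂ x + c₂) - v)‖ ^ 2 / 2 : ℝ) : EReal)))
        ≠ ⊤) ∧
    LowerSemicontinuous (fun x : X =>
        ((‖M₁ x + c₁‖ ^ 2 / 2 : ℝ) : EReal) -
          (μ : EReal) * ⨅ v : Z, (Ψ v + ((‖D (L (M₂ x + c₂) - v)‖ ^ 2 / 2 : ℝ) : EReal))) ∧
    Convex ℝ {p : X × ℝ |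
        ((‖M₁ p.1 + c₁‖ ^ 2 / 2 : ℝ) : EReal) -
          (μ : EReal) * (⨅ v : Z, (Ψ v + ((‖D (L (M₂ p.1 + c₂) - v)‖ ^ 2 / 2 : ℝ) : EReal)))
        ≤ (p.2 : EReal)} := by
  obtain ⟨z₀, hz₀⟩ := hΨtop
  obtain ⟨g, C, hmin⟩ := aux_affine_minorant Ψ hΨbot ⟨z₀, hz₀⟩ hΨlsc hΨconv
  obtain ⟨c, hc, hcD⟩ := aux_D_lower_bound D hDpd
  have hrep : ∀ x : X,
      (((‖M₁ x + c₁‖ ^ 2 / 2 : ℝ) : EReal) -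
          (μ : EReal) * ⨅ v : Z, (Ψ v + ((‖D (L (M₂ x + c₂) - v)‖ ^ 2 / 2 : ℝ) : EReal)))
        = ⨆ v : {v : Z // Ψ v ≠ ⊤},
            ((‖M₁ x + c₁‖ ^ 2 / 2
              - μ * ((Ψ v.1).toReal + ‖D (L (M₂ x + c₂) - v.1)‖ ^ 2 / 2) : ℝ) : EReal) :=
    fun x => aux_sup_rep Ψ hΨbot ⟨z₀, hz₀⟩
      (fun v => ‖D (L (M₂ x + c₂) - v)‖ ^ 2 / 2) (‖M₁ x + c₁‖ ^ 2 / 2) μ hμ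
  -- uniform lower bound for the infimum terms
  have hlow : ∀ (x : X) (v : {v : Z // Ψ v ≠ ⊤}),
      C - ‖g‖ * ‖L (M₂ x + c₂)‖ - ‖g‖^2 / (2 * c^2)
        ≤ (Ψ v.1).toReal + ‖D (L (M₂ x + c₂) - v.1)‖ ^ 2 / 2 := by
    intro x v
    set w : Z := L (M₂ x + c₂) with hw
    set t : ℝ := ‖w - v.1‖ with htdef
    have ht : 0 ≤ t := norm_nonneg _
    have hgv : g v.1 ≤ ‖g‖ * (‖w‖ + t) := by
      have h1 : g v.1 ≤ |g v.1| := le_abs_self _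
      have h2 : |g v.1| ≤ ‖g‖ * ‖v.1‖ := by
        have := g.le_opNorm v.1
        rwa [Real.norm_eq_abs] at this
      have h3 : ‖v.1‖ ≤ ‖w‖ + t := by
        have : v.1 = w - (w - v.1) := by abel
        rw [this]
        exact norm_sub_le _ _
      nlinarith [norm_nonneg g]
    have hD2 : c^2 * t^2 ≤ ‖D (w - v.1)‖^2 := by
      have := hcD (w - v.1)
      nlinarith [norm_nonneg (D (w - v.1)), mul_nonneg hc.le ht]
    have hmv : C - g v.1 ≤ (Ψ v.1).toReal := by
      have h1 := hmin v.1
      rw [← EReal.coe_toReal v.2 (hΨbot v.1), EReal.coe_le_coe_iff] at h1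
      exact h1
    have hq : ‖g‖^2 / (2 * c^2) * (2 * c^2) = ‖g‖^2 := by
      field_simp
    have hkey : 0 ≤ c^2 * t^2 / 2 - ‖g‖ * t + ‖g‖^2 / (2 * c^2) := by
      have h2c : (0:ℝ) < 2 * c^2 := by positivity
      nlinarith [sq_nonneg (c^2 * t - ‖g‖), hq, h2c, mul_pos h2c h2c]
    nlinarith [hD2]
  refine ⟨?_, ?_, ?_, ?_⟩
  · -- never ⊥
    intro x
    rw [hrep x]
    intro hb
    have h := le_iSup (fun v : {v : Z // Ψ v ≠ ⊤} =>
      ((‖M₁ x + c₁‖ ^ 2 / 2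
        - μ * ((Ψ v.1).toReal + ‖D (L (M₂ x + c₂) - v.1)‖ ^ 2 / 2) : ℝ) : EReal)) ⟨z₀, hz₀⟩
    rw [hb] at h
    exact EReal.coe_ne_bot _ (le_bot_iff.1 h)
  · -- somewhere ≠ ⊤
    refine ⟨0, ?_⟩
    rw [hrep 0]
    set m : ℝ := C - ‖g‖ * ‖L (M₂ 0 + c₂)‖ - ‖g‖^2 / (2 * c^2) with hm
    have hub : (⨆ v : {v : Z // Ψ v ≠ ⊤},
        ((‖M₁ 0 + c₁‖ ^ 2 / 2
          - μ * ((Ψ v.1).toReal + ‖D (L (M₂ 0 + c₂) - v.1)‖ ^ 2 / 2) : ℝ) : EReal))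
        ≤ ((‖M₁ 0 + c₁‖ ^ 2 / 2 - μ * m : ℝ) : EReal) := by
      apply iSup_le
      intro v
      rw [EReal.coe_le_coe_iff]
      have := hlow 0 v
      nlinarith
    intro htop
    rw [htop, top_le_iff] at hub
    exact EReal.coe_ne_top _ hub
  · -- lower semicontinuous
    have heq : (fun x : X =>
        ((‖M₁ x + c₁‖ ^ 2 / 2 : ℝ) : EReal) -
          (μ : EReal) * ⨅ v : Z, (Ψ v + ((‖D (L (M₂ x + c₂) - v)‖ ^ 2 / 2 : ℝ) : EReal)))
        = fun x : X => ⨆ v : {v : Z // Ψ v ≠ ⊤},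
            ((‖M₁ x + c₁‖ ^ 2 / 2
              - μ * ((Ψ v.1).toReal + ‖D (L (M₂ x + c₂) - v.1)‖ ^ 2 / 2) : ℝ) : EReal) :=
      funext hrep
    rw [heq]
    apply lowerSemicontinuous_iSup
    intro v
    apply Continuous.lowerSemicontinuous
    apply continuous_coe_real_ereal.comp
    have hM1c : Continuous fun x : X => M₁ x := M₁.continuous_of_finiteDimensional
    have hM2c : Continuous fun x : X => M₂ x := M₂.continuous_of_finiteDimensional
    have hDLM : Continuous fun x : X => D (L (M₂ x + c₂) - v.1) :=
      D.continuous_of_finiteDimensional.comp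
        ((L.continuous_of_finiteDimensional.comp (hM2c.add continuous_const)).sub
          continuous_const)
    exact (((hM1c.add continuous_const).norm.pow 2).div_const 2).sub
      (continuous_const.mul (continuous_const.add ((hDLM.norm.pow 2).div_const 2)))
  · -- convex epigraph
    have hset : {p : X × ℝ |
        ((‖M₁ p.1 + c₁‖ ^ 2 / 2 : ℝ) : EReal) -
          (μ : EReal) * (⨅ v : Z, (Ψ v + ((‖D (L (M₂ p.1 + c₂) - v)‖ ^ 2 / 2 : ℝ) : EReal)))
        ≤ (p.2 : EReal)}
        = ⋂ v : {v : Z // Ψ v ≠ ⊤}, {p : X × ℝ |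
            ‖M₁ p.1 + c₁‖ ^ 2 / 2
              - μ * ((Ψ v.1).toReal + ‖D (L (M₂ p.1 + c₂) - v.1)‖ ^ 2 / 2) ≤ p.2} := by
      ext p
      simp only [Set.mem_setOf_eq, Set.mem_iInter, hrep p.1, iSup_le_iff, EReal.coe_le_coe_iff]
    rw [hset]
    apply convex_iInter
    intro v
    have hq : ConvexOn ℝ Set.univ (fun x : X =>
        ‖M₁ x + c₁‖^2/2 - μ * ‖(D ∘ₗ (L ∘ₗ M₂)) x + (D (L c₂) - D v.1)‖^2/2) :=
      aux_convexOn_quad M₁ (D ∘ₗ (L ∘ₗ M₂)) c₁ (D (L c₂) - D v.1) μ hμ.le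
        (fun x => by simpa using hspade x)
    have hkeyeq : ∀ x : X, (D ∘ₗ (L ∘ₗ M₂)) x + (D (L c₂) - D v.1)
        = D (L (M₂ x + c₂) - v.1) := by
      intro x
      simp only [LinearMap.comp_apply, map_add, map_sub]
      abel
    have hcv : ConvexOn ℝ Set.univ (fun x : X =>
        ‖M₁ x + c₁‖ ^ 2 / 2
          - μ * ((Ψ v.1).toReal + ‖D (L (M₂ x + c₂) - v.1)‖ ^ 2 / 2)) := by
      refine ⟨convex_univ, fun x hx y hy t s ht hs hts => ?_⟩
      have H := hq.2 hx hy ht hs hts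
      simp only [hkeyeq] at H
      simp only [smul_eq_mul] at H ⊢
      have hts' : t * (μ * (Ψ v.1).toReal) + s * (μ * (Ψ v.1).toReal)
          = μ * (Ψ v.1).toReal := by rw [← add_mul, hts, one_mul]
      nlinarith [H, hts']
    have h2 : {p : X × ℝ |
        ‖M₁ p.1 + c₁‖ ^ 2 / 2
          - μ * ((Ψ v.1).toReal + ‖D (L (M₂ p.1 + c₂) - v.1)‖ ^ 2 / 2) ≤ p.2}
        = {p : X × ℝ | p.1 ∈ Set.univ ∧
            ‖M₁ p.1 + c₁‖ ^ 2 / 2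
              - μ * ((Ψ v.1).toReal + ‖D (L (M₂ p.1 + c₂) - v.1)‖ ^ 2 / 2) ≤ p.2} := by
      ext p; simp
    rw [h2]
    exact hcv.convex_epigraph
end
end

section
/- In the LiMES setup with seed function Ψ := σ_C, the support function of a nonempty closed convex set C ⊆ Z, the following equivalence holds for every x ∈ X: F(x) = ½‖𝒜₁x‖² − ½μ‖D𝓛𝒜₂x‖² if and only if x ∈ K_C := { x̂ ∈ X : D²𝓛𝒜₂x̂ ∈ C }. -/
open scoped RealInnerProductSpace

noncomputable section

/-- Proposition 5(b.i) of the paper.  In the LiMES setup with seed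
function the support function `σ_C` of a nonempty closed convex set `C ⊆ Z`, the smooth
part `F` satisfies, for every `x`,
`F(x) = ½‖𝒜₁x‖² − ½μ‖D𝓛𝒜₂x‖²` if and only if `D²𝓛𝒜₂x ∈ C`. -/
theorem limes_support_function_equality
    {X Y Z : Type*}
    [NormedAddCommGroup X] [InnerProductSpace ℝ X] [FiniteDimensional ℝ X]
    [NormedAddCommGroup Y] [InnerProductSpace ℝ Y] [FiniteDimensional ℝ Y]
    [NormedAddCommGroup Z] [InnerProductSpace ℝ Z] [FiniteDimensional ℝ Z]
    (M₁ : X →ₗ[ℝ] Y) (hM₁ : M₁ ≠ 0) (M₂ : X →ₗ[ℝ] Z) (hM₂ : M₂ ≠ 0)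
    (c₁ : Y) (c₂ : Z) (L : Z →ₗ[ℝ] Z) (hL : L ≠ 0)
    (D : Z →ₗ[ℝ] Z) (hDsa : ∀ u v : Z, ⟪D u, v⟫ = ⟪u, D v⟫)
    (hDpd : ∀ z : Z, z ≠ 0 → 0 < ⟪D z, z⟫)
    (μ : ℝ) (hμ : 0 < μ)
    (C : Set Z) (hCne : C.Nonempty) (hCcl : IsClosed C) (hCcv : Convex ℝ C) :
    ∀ x : X,
      (((‖M₁ x + c₁‖ ^ 2 / 2 : ℝ) : EReal) -
          (μ : EReal) * ⨅ v : Z,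
            ((⨆ w : C, ((⟪v, (w : Z)⟫ : ℝ) : EReal)) +
              ((‖D (L (M₂ x + c₂) - v)‖ ^ 2 / 2 : ℝ) : EReal)))
        = ((‖M₁ x + c₁‖ ^ 2 / 2 - μ * ‖D (L (M₂ x + c₂))‖ ^ 2 / 2 : ℝ) : EReal)
      ↔ D (D (L (M₂ x + c₂))) ∈ C := by
  intro x
  have hCne' : Nonempty C := hCne.to_subtype
  set a : ℝ := ‖M₁ x + c₁‖ ^ 2 / 2 with ha
  set s : Z := L (M₂ x + c₂) with hs
  set b : ℝ := ‖D s‖ ^ 2 / 2 with hb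
  set g : Z → EReal := fun v =>
    (⨆ w : C, ((⟪v, (w : Z)⟫ : ℝ) : EReal)) + ((‖D (s - v)‖ ^ 2 / 2 : ℝ) : EReal) with hgdef
  have hquad : ∀ v : Z, ‖D (s - v)‖ ^ 2 / 2 = b + ‖D v‖ ^ 2 / 2 - ⟪D s, D v⟫ := by
    intro v
    rw [map_sub, norm_sub_sq_real, hb]; ring
  have hg0 : g 0 = (b : EReal) := by
    have : (⨆ w : C, ((⟪(0 : Z), (w : Z)⟫ : ℝ) : EReal)) = 0 := by
      simp [inner_zero_left]
    simp [hgdef, this, sub_zero, hb]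
  have hIle : (⨅ v : Z, g v) ≤ (b : EReal) := hg0 ▸ iInf_le g 0
  constructor
  · -- equality ⇒ membership
    intro heq
    -- the infimum is finite and equals b
    have hInetop : (⨅ v : Z, g v) ≠ ⊤ := fun h => by
      rw [h] at hIle; exact (EReal.coe_ne_top b) (top_le_iff.mp hIle)
    have hInebot : (⨅ v : Z, g v) ≠ ⊥ := by
      intro h
      rw [h, EReal.coe_mul_bot_of_pos hμ, EReal.coe_sub_bot] at heq
      exact (EReal.coe_ne_top _) heq.symm
    obtain ⟨r, hr⟩ : ∃ r : ℝ, (⨅ v : Z, g v) = (r : ℝ) :=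
      ⟨(⨅ v : Z, g v).toReal, (EReal.coe_toReal hInetop hInebot).symm⟩
    have hrb : r = b := by
      rw [hr, ← EReal.coe_mul, ← EReal.coe_sub] at heq
      have := EReal.coe_eq_coe_iff.mp heq
      have hb2 : μ * ‖D s‖ ^ 2 / 2 = μ * b := by rw [hb]; ring
      rw [hb2] at this
      have : μ * r = μ * b := by linarith
      exact mul_left_cancel₀ (ne_of_gt hμ) this
    have hbv : ∀ v : Z, (b : EReal) ≤ g v := fun v => by
      rw [← hrb, ← hr]; exact iInf_le g v
    -- separation
    by_contra hp
    obtain ⟨f, u, hfC, hfp⟩ := geometric_hahn_banach_closed_point hCcv hCcl hp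
    set v : Z := (InnerProductSpace.toDual ℝ Z).symm f with hv
    have hfv : ∀ z : Z, ⟪v, z⟫ = f z := fun z => InnerProductSpace.toDual_symm_apply
    have key : ∀ t : ℝ, 0 < t →
        0 ≤ t * u + t ^ 2 * (‖D v‖ ^ 2 / 2) - t * ⟪D s, D v⟫ := by
      intro t ht
      have h1 : (⨆ w : C, ((⟪t • v, (w : Z)⟫ : ℝ) : EReal)) ≤ ((t * u : ℝ) : EReal) := by
        refine iSup_le fun w => ?_
        rw [EReal.coe_le_coe_iff, real_inner_smul_left]
        exact mul_le_mul_of_nonneg_left (le_of_lt ((hfv (w : Z)) ▸ hfC (w : Z) w.2))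
          (le_of_lt ht)
      have h2 : (b : EReal) ≤ ((t * u + ‖D (s - t • v)‖ ^ 2 / 2 : ℝ) : EReal) := by
        refine le_trans (hbv (t • v)) ?_
        rw [EReal.coe_add]
        exact add_le_add_left h1 _
      have h3 : b ≤ t * u + ‖D (s - t • v)‖ ^ 2 / 2 := EReal.coe_le_coe_iff.mp h2
      have h4 : ‖D (s - t • v)‖ ^ 2 / 2 = b + t ^ 2 * (‖D v‖ ^ 2 / 2) - t * ⟪D s, D v⟫ := by
        have := hquad (t • v)
        rw [map_smul, norm_smul, real_inner_smul_right] at this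
        rw [this]
        simp [abs_mul_abs_self, mul_pow]
        ring
      rw [h4] at h3; linarith
    have hle : ⟪D s, D v⟫ ≤ u := by
      by_contra hgt
      push_neg at hgt
      set q : ℝ := ⟪D s, D v⟫ with hq
      set B : ℝ := ‖D v‖ ^ 2 / 2 with hB
      have hBnn : 0 ≤ B := by positivity
      set t : ℝ := (q - u) / (2 * B + 1) with htdef
      have hden : (0:ℝ) < 2 * B + 1 := by linarith
      have ht : 0 < t := div_pos (by linarith) hden
      have hkey := key t ht
      have hfac : t * u + t ^ 2 * B - t * q = t * (u - q + t * B) := by ring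
      rw [hfac] at hkey
      have h5 : 0 ≤ u - q + t * B := by
        by_contra hneg
        push_neg at hneg
        nlinarith
      have htB : t * B ≤ (q - u) / 2 := by
        rw [htdef, div_mul_eq_mul_div, div_le_div_iff₀ hden (by norm_num : (0:ℝ) < 2)]
        nlinarith
      linarith
    have : ⟪D s, D v⟫ = f (D (D s)) := by
      rw [← hfv, real_inner_comm, hDsa]
    linarith [hfp, this ▸ hle]
  · -- membership ⇒ equality
    intro hp
    have hIge : (b : EReal) ≤ ⨅ v : Z, g v := by
      refine le_iInf fun v => ?_
      have h1 : ((⟪v, D (D s)⟫ : ℝ) : EReal) ≤ ⨆ w : C, ((⟪v, (w : Z)⟫ : ℝ) : EReal) :=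
        le_iSup (fun w : C => ((⟪v, (w : Z)⟫ : ℝ) : EReal)) ⟨D (D s), hp⟩
      have h2 : ((⟪v, D (D s)⟫ + ‖D (s - v)‖ ^ 2 / 2 : ℝ) : EReal) ≤ g v := by
        rw [EReal.coe_add]
        exact add_le_add_left h1 _
      refine le_trans ?_ h2
      rw [EReal.coe_le_coe_iff]
      have h3 : ⟪v, D (D s)⟫ = ⟪D s, D v⟫ := by
        rw [← hDsa, real_inner_comm]
      rw [h3, hquad v]
      nlinarith [sq_nonneg ‖D v‖, sq_nonneg (‖D s‖ - ‖D v‖)]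
    have hIeq : (⨅ v : Z, g v) = (b : EReal) := le_antisymm hIle hIge
    rw [hIeq, ← EReal.coe_mul, ← EReal.coe_sub]
    congr 1
    rw [hb]; ring
end
end

section
/- In the LiMES setup with seed function Ψ := σ_C, the support function of a nonempty closed convex set C ⊆ Z, assume that the interior of K_C := { x̂ ∈ X : D²𝓛𝒜₂x̂ ∈ C } is nonempty. Then the smooth part F is a proper lower-semicontinuous convex function on X if and only if condition (♠) holds, i.e., M₁*M₁ − μ M₂*𝓛*D²𝓛M₂ is positive semidefinite. -/
open scoped RealInnerProductSpace

noncomputable section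

private lemma aux_comb_sq {E : Type*} [NormedAddCommGroup E] [InnerProductSpace ℝ E]
    (u v : E) {t s : ℝ} (hts : t + s = 1) :
    ‖t • u + s • v‖ ^ 2 = t * ‖u‖ ^ 2 + s * ‖v‖ ^ 2 - t * s * ‖u - v‖ ^ 2 := by
  have h1 : ‖t • u + s • v‖ ^ 2 = t ^ 2 * ‖u‖ ^ 2 + 2 * (t * (s * ⟪u, v⟫)) + s ^ 2 * ‖v‖ ^ 2 := by
    rw [norm_add_sq_real, real_inner_smul_left, real_inner_smul_right, norm_smul, norm_smul,
      mul_pow, mul_pow, Real.norm_eq_abs, Real.norm_eq_abs, sq_abs, sq_abs]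
  have h2 : ‖u - v‖ ^ 2 = ‖u‖ ^ 2 - 2 * ⟪u, v⟫ + ‖v‖ ^ 2 := norm_sub_sq_real u v
  rw [h1, h2]
  linear_combination (t * ‖u‖ ^ 2 + s * ‖v‖ ^ 2) * hts

private lemma aux_q_affine {E : Type*} [NormedAddCommGroup E] [InnerProductSpace ℝ E]
    (a₁ a₂ b : E) {t s : ℝ} (hts : t + s = 1) :
    ‖(t • a₁ + s • a₂) - b‖ ^ 2 / 2 - ‖t • a₁ + s • a₂‖ ^ 2 / 2
      = t * (‖a₁ - b‖ ^ 2 / 2 - ‖a₁‖ ^ 2 / 2) + s * (‖a₂ - b‖ ^ 2 / 2 - ‖a₂‖ ^ 2 / 2) := by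
  rw [norm_sub_sq_real, norm_sub_sq_real, norm_sub_sq_real, inner_add_left,
    real_inner_smul_left, real_inner_smul_left]
  linear_combination (-(‖b‖ ^ 2) / 2) * hts

private lemma aux_parallelogram {E : Type*} [NormedAddCommGroup E] [InnerProductSpace ℝ E]
    (A B : E) (t : ℝ) :
    ‖A + t • B‖ ^ 2 + ‖A - t • B‖ ^ 2 = 2 * ‖A‖ ^ 2 + 2 * (t ^ 2 * ‖B‖ ^ 2) := by
  rw [norm_add_sq_real, norm_sub_sq_real, norm_smul, mul_pow, Real.norm_eq_abs, sq_abs]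
  ring

private def limesGr {Z : Type*} [NormedAddCommGroup Z] [InnerProductSpace ℝ Z]
    (D : Z →ₗ[ℝ] Z) (C : Set Z) (z : Z) : ℝ :=
  (⨅ v : Z, ((⨆ w : C, ((⟪v, (w : Z)⟫ : ℝ) : EReal)) +
      ((‖D (z - v)‖ ^ 2 / 2 : ℝ) : EReal))).toReal

private lemma limes_inf_lb {Z : Type*} [NormedAddCommGroup Z] [InnerProductSpace ℝ Z]
    (D : Z →ₗ[ℝ] Z) (C : Set Z) {w₀ : Z} (hw₀ : w₀ ∈ C) (z v : Z) :
    ((⟪v, w₀⟫ + ‖D (z - v)‖ ^ 2 / 2 : ℝ) : EReal) ≤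
      (⨆ w : C, ((⟪v, (w : Z)⟫ : ℝ) : EReal)) + ((‖D (z - v)‖ ^ 2 / 2 : ℝ) : EReal) := by
  rw [EReal.coe_add]
  exact add_le_add (le_iSup (fun w : C => ((⟪v, (w : Z)⟫ : ℝ) : EReal)) ⟨w₀, hw₀⟩) le_rfl

private lemma limes_inf_ub {Z : Type*} [NormedAddCommGroup Z] [InnerProductSpace ℝ Z]
    (D : Z →ₗ[ℝ] Z) (C : Set Z) {w₀ : Z} (hw₀ : w₀ ∈ C) (z : Z) :
    (⨅ v : Z, ((⨆ w : C, ((⟪v, (w : Z)⟫ : ℝ) : EReal)) +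
        ((‖D (z - v)‖ ^ 2 / 2 : ℝ) : EReal))) ≤ ((‖D z‖ ^ 2 / 2 : ℝ) : EReal) := by
  haveI : Nonempty C := ⟨⟨w₀, hw₀⟩⟩
  have h := iInf_le (fun v : Z => (⨆ w : C, ((⟪v, (w : Z)⟫ : ℝ) : EReal)) +
      ((‖D (z - v)‖ ^ 2 / 2 : ℝ) : EReal)) (0 : Z)
  simpa [inner_zero_left, sub_zero] using h

private lemma limes_inf_eq {Z : Type*} [NormedAddCommGroup Z] [InnerProductSpace ℝ Z]
    (D : Z →ₗ[ℝ] Z) (C : Set Z) {w₀ : Z} (hw₀ : w₀ ∈ C) {Cc : ℝ} (hCc : 0 < Cc)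
    (hDlow : ∀ u : Z, ‖u‖ ≤ Cc * ‖D u‖) (z : Z) :
    (⨅ v : Z, ((⨆ w : C, ((⟪v, (w : Z)⟫ : ℝ) : EReal)) +
        ((‖D (z - v)‖ ^ 2 / 2 : ℝ) : EReal))) = ((limesGr D C z : ℝ) : EReal) := by
  have hlb : ((⟪z, w₀⟫ - Cc ^ 2 * ‖w₀‖ ^ 2 / 2 : ℝ) : EReal) ≤
      (⨅ v : Z, ((⨆ w : C, ((⟪v, (w : Z)⟫ : ℝ) : EReal)) +
        ((‖D (z - v)‖ ^ 2 / 2 : ℝ) : EReal))) := by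
    refine le_iInf fun v => ?_
    refine le_trans ?_ (limes_inf_lb D C hw₀ z v)
    rw [EReal.coe_le_coe_iff]
    have hinner : ⟪z - v, w₀⟫ = ⟪z, w₀⟫ - ⟪v, w₀⟫ := inner_sub_left z v w₀
    have habs : ⟪z - v, w₀⟫ ≤ ‖z - v‖ * ‖w₀‖ := real_inner_le_norm _ _
    have hD := hDlow (z - v)
    have hDa := mul_le_mul_of_nonneg_right hD (norm_nonneg w₀)
    nlinarith [sq_nonneg (‖D (z - v)‖ - Cc * ‖w₀‖), norm_nonneg (D (z - v)), norm_nonneg w₀]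
  have hub := limes_inf_ub D C hw₀ z
  have hne_top : (⨅ v : Z, ((⨆ w : C, ((⟪v, (w : Z)⟫ : ℝ) : EReal)) +
      ((‖D (z - v)‖ ^ 2 / 2 : ℝ) : EReal))) ≠ ⊤ :=
    ne_top_of_le_ne_top (EReal.coe_ne_top _) hub
  have hne_bot : (⨅ v : Z, ((⨆ w : C, ((⟪v, (w : Z)⟫ : ℝ) : EReal)) +
      ((‖D (z - v)‖ ^ 2 / 2 : ℝ) : EReal))) ≠ ⊥ := by
    intro h
    rw [h, le_bot_iff] at hlb
    exact EReal.coe_ne_bot _ hlb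
  exact (EReal.coe_toReal hne_top hne_bot).symm

private lemma limesGr_eq_of_mem {Z : Type*} [NormedAddCommGroup Z] [InnerProductSpace ℝ Z]
    (D : Z →ₗ[ℝ] Z) (C : Set Z)
    (hDsa : ∀ u v : Z, ⟪D u, v⟫ = ⟪u, D v⟫) {z : Z} (hz : D (D z) ∈ C) :
    limesGr D C z = ‖D z‖ ^ 2 / 2 := by
  have hle : ((‖D z‖ ^ 2 / 2 : ℝ) : EReal) ≤
      (⨅ v : Z, ((⨆ w : C, ((⟪v, (w : Z)⟫ : ℝ) : EReal)) +
        ((‖D (z - v)‖ ^ 2 / 2 : ℝ) : EReal))) := by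
    refine le_iInf fun v => ?_
    refine le_trans ?_ (limes_inf_lb D C hz z v)
    rw [EReal.coe_le_coe_iff]
    have h1 : ⟪D v, D z⟫ = ⟪v, D (D z)⟫ := hDsa v (D z)
    have h2 : ⟪D z, D v⟫ = ⟪D v, D z⟫ := real_inner_comm _ _
    have hexp : ‖D (z - v)‖ ^ 2 = ‖D z‖ ^ 2 - 2 * ⟪D z, D v⟫ + ‖D v‖ ^ 2 := by
      rw [map_sub]; exact norm_sub_sq_real _ _
    nlinarith [sq_nonneg ‖D v‖]
  have heq : (⨅ v : Z, ((⨆ w : C, ((⟪v, (w : Z)⟫ : ℝ) : EReal)) +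
      ((‖D (z - v)‖ ^ 2 / 2 : ℝ) : EReal))) = ((‖D z‖ ^ 2 / 2 : ℝ) : EReal) :=
    le_antisymm (limes_inf_ub D C hz z) hle
  rw [limesGr, heq, EReal.toReal_coe]

private lemma limesGr_convexOn {Z : Type*} [NormedAddCommGroup Z] [InnerProductSpace ℝ Z]
    (D : Z →ₗ[ℝ] Z) (C : Set Z) {w₀ : Z} (hw₀ : w₀ ∈ C) {Cc : ℝ} (hCc : 0 < Cc)
    (hDlow : ∀ u : Z, ‖u‖ ≤ Cc * ‖D u‖) :
    ConvexOn ℝ (Set.univ : Set Z) (fun z => ‖D z‖ ^ 2 / 2 - limesGr D C z) := by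
  refine ⟨convex_univ, fun z₁ _ z₂ _ t s ht hs hts => ?_⟩
  simp only [smul_eq_mul]
  have key : ((t * limesGr D C z₁ + s * limesGr D C z₂ +
      (‖D (t • z₁ + s • z₂)‖ ^ 2 / 2 - t * (‖D z₁‖ ^ 2 / 2) - s * (‖D z₂‖ ^ 2 / 2)) : ℝ) : EReal)
      ≤ (⨅ v : Z, ((⨆ w : C, ((⟪v, (w : Z)⟫ : ℝ) : EReal)) +
        ((‖D ((t • z₁ + s • z₂) - v)‖ ^ 2 / 2 : ℝ) : EReal))) := by
    refine le_iInf fun v => ?_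
    by_cases hv : (⨆ w : C, ((⟪v, (w : Z)⟫ : ℝ) : EReal)) = ⊤
    · rw [hv, EReal.top_add_coe]
      exact le_top
    · have hvb : (⨆ w : C, ((⟪v, (w : Z)⟫ : ℝ) : EReal)) ≠ ⊥ := by
        have hge := le_iSup (fun w : C => ((⟪v, (w : Z)⟫ : ℝ) : EReal)) ⟨w₀, hw₀⟩
        exact ((EReal.bot_lt_coe _).trans_le hge).ne'
      set a : ℝ := (⨆ w : C, ((⟪v, (w : Z)⟫ : ℝ) : EReal)).toReal with hadef
      have hav : (⨆ w : C, ((⟪v, (w : Z)⟫ : ℝ) : EReal)) = (a : EReal) :=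
        (EReal.coe_toReal hv hvb).symm
      rw [hav, ← EReal.coe_add, EReal.coe_le_coe_iff]
      have h₁ : limesGr D C z₁ ≤ a + ‖D (z₁ - v)‖ ^ 2 / 2 := by
        have h := iInf_le (fun v : Z => (⨆ w : C, ((⟪v, (w : Z)⟫ : ℝ) : EReal)) +
            ((‖D (z₁ - v)‖ ^ 2 / 2 : ℝ) : EReal)) v
        rw [limes_inf_eq D C hw₀ hCc hDlow z₁] at h
        simp only [hav, ← EReal.coe_add, EReal.coe_le_coe_iff] at h
        exact h
      have h₂ : limesGr D C z₂ ≤ a + ‖D (z₂ - v)‖ ^ 2 / 2 := by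
        have h := iInf_le (fun v : Z => (⨆ w : C, ((⟪v, (w : Z)⟫ : ℝ) : EReal)) +
            ((‖D (z₂ - v)‖ ^ 2 / 2 : ℝ) : EReal)) v
        rw [limes_inf_eq D C hw₀ hCc hDlow z₂] at h
        simp only [hav, ← EReal.coe_add, EReal.coe_le_coe_iff] at h
        exact h
      have hid : ‖D ((t • z₁ + s • z₂) - v)‖ ^ 2 / 2 - ‖D (t • z₁ + s • z₂)‖ ^ 2 / 2
          = t * (‖D (z₁ - v)‖ ^ 2 / 2 - ‖D z₁‖ ^ 2 / 2)
            + s * (‖D (z₂ - v)‖ ^ 2 / 2 - ‖D z₂‖ ^ 2 / 2) := by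
        have e1 : D ((t • z₁ + s • z₂) - v) = (t • D z₁ + s • D z₂) - D v := by
          simp [map_add, map_sub, map_smul]
        have e2 : D (t • z₁ + s • z₂) = t • D z₁ + s • D z₂ := by
          simp [map_add, map_smul]
        have e3 : D (z₁ - v) = D z₁ - D v := map_sub D z₁ v
        have e4 : D (z₂ - v) = D z₂ - D v := map_sub D z₂ v
        rw [e1, e2, e3, e4]
        exact aux_q_affine (D z₁) (D z₂) (D v) hts
      have hta : t * a + s * a = a := by rw [← add_mul, hts, one_mul]
      have th₁ := mul_le_mul_of_nonneg_left h₁ ht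
      have th₂ := mul_le_mul_of_nonneg_left h₂ hs
      nlinarith [th₁, th₂, hid, hta]
  rw [limes_inf_eq D C hw₀ hCc hDlow (t • z₁ + s • z₂), EReal.coe_le_coe_iff] at key
  linarith [key]


set_option maxHeartbeats 2000000 in
/-- Proposition 5(b.ii) of the paper.  In the LiMES setup with seed
function the support function `σ_C` of a nonempty closed convex set `C ⊆ Z`, assuming
`int K_C ≠ ∅` where `K_C = {x | D²𝓛𝒜₂x ∈ C}`, the smooth part `F` is a proper
lower-semicontinuous convex function on `X` if and only if condition (♠) holds, i.e.
`μ‖D𝓛M₂x‖² ≤ ‖M₁x‖²` for all `x` (PSD of `M₁*M₁ − μM₂*𝓛*D²𝓛M₂`). -/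
theorem limes_support_function_convexity_iff
    {X Y Z : Type*}
    [NormedAddCommGroup X] [InnerProductSpace ℝ X] [FiniteDimensional ℝ X]
    [NormedAddCommGroup Y] [InnerProductSpace ℝ Y] [FiniteDimensional ℝ Y]
    [NormedAddCommGroup Z] [InnerProductSpace ℝ Z] [FiniteDimensional ℝ Z]
    (M₁ : X →ₗ[ℝ] Y) (hM₁ : M₁ ≠ 0) (M₂ : X →ₗ[ℝ] Z) (hM₂ : M₂ ≠ 0)
    (c₁ : Y) (c₂ : Z) (L : Z →ₗ[ℝ] Z) (hL : L ≠ 0)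
    (D : Z →ₗ[ℝ] Z) (hDsa : ∀ u v : Z, ⟪D u, v⟫ = ⟪u, D v⟫)
    (hDpd : ∀ z : Z, z ≠ 0 → 0 < ⟪D z, z⟫)
    (μ : ℝ) (hμ : 0 < μ)
    (C : Set Z) (hCne : C.Nonempty) (hCcl : IsClosed C) (hCcv : Convex ℝ C)
    (hKC : (interior {x : X | D (D (L (M₂ x + c₂))) ∈ C}).Nonempty) :
    ((∀ x : X,
        (((‖M₁ x + c₁‖ ^ 2 / 2 : ℝ) : EReal) -
          (μ : EReal) * ⨅ v : Z,
            ((⨆ w : C, ((⟪v, (w : Z)⟫ : ℝ) : EReal)) +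
              ((‖D (L (M₂ x + c₂) - v)‖ ^ 2 / 2 : ℝ) : EReal)))
        ≠ ⊥) ∧
      (∃ x : X,
        (((‖M₁ x + c₁‖ ^ 2 / 2 : ℝ) : EReal) -
          (μ : EReal) * ⨅ v : Z,
            ((⨆ w : C, ((⟪v, (w : Z)⟫ : ℝ) : EReal)) +
              ((‖D (L (M₂ x + c₂) - v)‖ ^ 2 / 2 : ℝ) : EReal)))
        ≠ ⊤) ∧
      LowerSemicontinuous (fun x : X =>
        ((‖M₁ x + c₁‖ ^ 2 / 2 : ℝ) : EReal) -
          (μ : EReal) * ⨅ v : Z,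
            ((⨆ w : C, ((⟪v, (w : Z)⟫ : ℝ) : EReal)) +
              ((‖D (L (M₂ x + c₂) - v)‖ ^ 2 / 2 : ℝ) : EReal))) ∧
      Convex ℝ {p : X × ℝ |
        ((‖M₁ p.1 + c₁‖ ^ 2 / 2 : ℝ) : EReal) -
          (μ : EReal) * (⨅ v : Z,
            ((⨆ w : C, ((⟪v, (w : Z)⟫ : ℝ) : EReal)) +
              ((‖D (L (M₂ p.1 + c₂) - v)‖ ^ 2 / 2 : ℝ) : EReal)))
        ≤ (p.2 : EReal)})
    ↔ (∀ x : X, μ * ‖D (L (M₂ x))‖ ^ 2 ≤ ‖M₁ x‖ ^ 2) := by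
  obtain ⟨w₀, hw₀⟩ := hCne
  -- a positive constant `Cc` with `‖u‖ ≤ Cc * ‖D u‖`
  have hZnt : Nontrivial Z := by
    by_contra h
    rw [not_nontrivial_iff_subsingleton] at h
    exact hL (Subsingleton.elim _ _)
  have hDinj : Function.Injective D := by
    intro u v huv
    by_contra hne
    have h := hDpd (u - v) (sub_ne_zero.mpr hne)
    rw [map_sub, huv, sub_self] at h
    simp at h
  obtain ⟨Cc, hCc, hDlow⟩ : ∃ Cc : ℝ, 0 < Cc ∧ ∀ u : Z, ‖u‖ ≤ Cc * ‖D u‖ := by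
    let e : Z ≃ₗ[ℝ] Z := LinearEquiv.ofInjectiveEndo D hDinj
    let ec : Z ≃L[ℝ] Z := e.toContinuousLinearEquiv
    refine ⟨‖(ec.symm : Z →L[ℝ] Z)‖ + 1, by positivity, fun u => ?_⟩
    have h1 : ec.symm (ec u) = u := ec.symm_apply_apply u
    have h2 : ‖(ec.symm : Z →L[ℝ] Z) (ec u)‖ ≤ ‖(ec.symm : Z →L[ℝ] Z)‖ * ‖ec u‖ :=
      (ec.symm : Z →L[ℝ] Z).le_opNorm _
    have h3 : ec u = D u := rfl
    rw [h3] at h1 h2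
    calc ‖u‖ = ‖ec.symm (D u)‖ := by rw [h1]
      _ ≤ ‖(ec.symm : Z →L[ℝ] Z)‖ * ‖D u‖ := h2
      _ ≤ (‖(ec.symm : Z →L[ℝ] Z)‖ + 1) * ‖D u‖ := by
          apply mul_le_mul_of_nonneg_right _ (norm_nonneg _)
          linarith
  -- the key rewriting of the EReal expression into a real-valued function
  have hF : ∀ x : X,
      ((((‖M₁ x + c₁‖ ^ 2 / 2 : ℝ) : EReal) -
        (μ : EReal) * ⨅ v : Z,
          ((⨆ w : C, ((⟪v, (w : Z)⟫ : ℝ) : EReal)) +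
            ((‖D (L (M₂ x + c₂) - v)‖ ^ 2 / 2 : ℝ) : EReal))))
      = ((‖M₁ x + c₁‖ ^ 2 / 2 - μ * limesGr D C (L (M₂ x + c₂)) : ℝ) : EReal) := by
    intro x
    rw [limes_inf_eq D C hw₀ hCc hDlow (L (M₂ x + c₂)), ← EReal.coe_mul, ← EReal.coe_sub]
  constructor
  · rintro ⟨-, -, -, hS⟩ x
    obtain ⟨x₀, hx₀⟩ := hKC
    have hx₀K : x₀ ∈ {x : X | D (D (L (M₂ x + c₂))) ∈ C} := interior_subset hx₀
    obtain ⟨ε, hε, hball⟩ := Metric.mem_nhds_iff.mp (mem_interior_iff_mem_nhds.mp hx₀)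
    have hmemC : ∀ y : X, ‖y - x₀‖ < ε → D (D (L (M₂ y + c₂))) ∈ C := by
      intro y hy
      exact hball (by simpa [Metric.mem_ball, dist_eq_norm] using hy)
    obtain ⟨t, ht, htx⟩ : ∃ t : ℝ, 0 < t ∧ ‖t • x‖ < ε := by
      refine ⟨ε / (‖x‖ + 1), by positivity, ?_⟩
      rw [norm_smul, Real.norm_eq_abs, abs_of_pos (by positivity), div_mul_eq_mul_div,
        div_lt_iff₀ (by positivity)]
      nlinarith [norm_nonneg x]
    have hP1 : D (D (L (M₂ (x₀ + t • x) + c₂))) ∈ C := by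
      apply hmemC
      simpa using htx
    have hM1 : D (D (L (M₂ (x₀ - t • x) + c₂))) ∈ C := by
      apply hmemC
      have : x₀ - t • x - x₀ = -(t • x) := by abel
      rw [this, norm_neg]
      exact htx
    have hgr₀ := limesGr_eq_of_mem D C hDsa hx₀K
    have hgrP := limesGr_eq_of_mem D C hDsa hP1
    have hgrM := limesGr_eq_of_mem D C hDsa hM1
    have hmem : ∀ y : X,
        (y, ‖M₁ y + c₁‖ ^ 2 / 2 - μ * limesGr D C (L (M₂ y + c₂))) ∈ {p : X × ℝ |
          ((‖M₁ p.1 + c₁‖ ^ 2 / 2 : ℝ) : EReal) -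
            (μ : EReal) * (⨅ v : Z,
              ((⨆ w : C, ((⟪v, (w : Z)⟫ : ℝ) : EReal)) +
                ((‖D (L (M₂ p.1 + c₂) - v)‖ ^ 2 / 2 : ℝ) : EReal)))
          ≤ (p.2 : EReal)} := by
      intro y
      simp only [Set.mem_setOf_eq]
      rw [hF y]
    have hcomb := hS (hmem (x₀ + t • x)) (hmem (x₀ - t • x))
      (by norm_num : (0:ℝ) ≤ 1/2) (by norm_num : (0:ℝ) ≤ 1/2) (by norm_num)
    simp only [Prod.smul_mk, Prod.mk_add_mk, Set.mem_setOf_eq, smul_eq_mul] at hcomb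
    have hfst : (1/2 : ℝ) • (x₀ + t • x) + (1/2 : ℝ) • (x₀ - t • x) = x₀ := by
      module
    rw [hfst, hF x₀] at hcomb
    have hreal := EReal.coe_le_coe_iff.mp hcomb
    rw [hgr₀, hgrP, hgrM] at hreal
    have eAP : M₁ (x₀ + t • x) + c₁ = (M₁ x₀ + c₁) + t • M₁ x := by
      rw [map_add, map_smul]; abel
    have eAM : M₁ (x₀ - t • x) + c₁ = (M₁ x₀ + c₁) - t • M₁ x := by
      rw [map_sub, map_smul]; abel
    have eMP : M₂ (x₀ + t • x) + c₂ = (M₂ x₀ + c₂) + t • M₂ x := by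
      rw [map_add, map_smul]; abel
    have eMM : M₂ (x₀ - t • x) + c₂ = (M₂ x₀ + c₂) - t • M₂ x := by
      rw [map_sub, map_smul]; abel
    have ePP : D (L (M₂ (x₀ + t • x) + c₂)) = D (L (M₂ x₀ + c₂)) + t • D (L (M₂ x)) := by
      rw [eMP, map_add, map_smul, map_add, map_smul]
    have ePM : D (L (M₂ (x₀ - t • x) + c₂)) = D (L (M₂ x₀ + c₂)) - t • D (L (M₂ x)) := by
      rw [eMM, map_sub, map_smul, map_sub, map_smul]
    rw [eAP, eAM, ePP, ePM] at hreal
    have hpar1 := aux_parallelogram (M₁ x₀ + c₁) (M₁ x) t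
    have hpar2 := aux_parallelogram (D (L (M₂ x₀ + c₂))) (D (L (M₂ x))) t
    have hpar2μ : μ * (‖D (L (M₂ x₀ + c₂)) + t • D (L (M₂ x))‖ ^ 2 +
        ‖D (L (M₂ x₀ + c₂)) - t • D (L (M₂ x))‖ ^ 2)
        = μ * (2 * ‖D (L (M₂ x₀ + c₂))‖ ^ 2 + 2 * (t ^ 2 * ‖D (L (M₂ x))‖ ^ 2)) := by
      rw [hpar2]
    have key : μ * (t ^ 2 * ‖D (L (M₂ x))‖ ^ 2) ≤ t ^ 2 * ‖M₁ x‖ ^ 2 := by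
      linarith [hreal, hpar1, hpar2μ]
    have ht2 : 0 < t ^ 2 := by positivity
    nlinarith [key, ht2]
  · intro hsp
    have hφ := limesGr_convexOn D C hw₀ hCc hDlow
    have hφcont : Continuous (fun z : Z => ‖D z‖ ^ 2 / 2 - limesGr D C z) := by
      rw [← continuousOn_univ]
      exact ConvexOn.continuousOn isOpen_univ hφ
    have hDcont : Continuous D := D.continuous_of_finiteDimensional
    have hqcont : Continuous (fun z : Z => ‖D z‖ ^ 2 / 2) :=
      (hDcont.norm.pow 2).div_const 2
    have hgrcont : Continuous (limesGr D C) := by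
      have hrw : (limesGr D C) = fun z => ‖D z‖ ^ 2 / 2 - (‖D z‖ ^ 2 / 2 - limesGr D C z) := by
        funext z; ring
      rw [hrw]
      exact hqcont.sub hφcont
    have hM₂c : Continuous (fun x : X => M₂ x + c₂) :=
      (M₂.continuous_of_finiteDimensional).add continuous_const
    have hLc : Continuous L := L.continuous_of_finiteDimensional
    have hFcont : Continuous (fun x : X =>
        ‖M₁ x + c₁‖ ^ 2 / 2 - μ * limesGr D C (L (M₂ x + c₂))) := by
      apply Continuous.sub
      · exact (((M₁.continuous_of_finiteDimensional.add continuous_const).norm.pow 2).div_const 2)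
      · exact continuous_const.mul (hgrcont.comp (hLc.comp hM₂c))
    -- convexity of the real-valued function
    have hQconv : ∀ (x₁ x₂ : X) (t s : ℝ), 0 ≤ t → 0 ≤ s → t + s = 1 →
        ‖M₁ (t • x₁ + s • x₂) + c₁‖ ^ 2 / 2
            - μ * limesGr D C (L (M₂ (t • x₁ + s • x₂) + c₂))
          ≤ t * (‖M₁ x₁ + c₁‖ ^ 2 / 2 - μ * limesGr D C (L (M₂ x₁ + c₂)))
            + s * (‖M₁ x₂ + c₁‖ ^ 2 / 2 - μ * limesGr D C (L (M₂ x₂ + c₂))) := by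
      intro x₁ x₂ t s ht hs hts
      have e1 : M₁ (t • x₁ + s • x₂) + c₁ = t • (M₁ x₁ + c₁) + s • (M₁ x₂ + c₁) := by
        rw [map_add, map_smul, map_smul]
        match_scalars <;> linarith
      have eL : L (M₂ (t • x₁ + s • x₂) + c₂)
          = t • L (M₂ x₁ + c₂) + s • L (M₂ x₂ + c₂) := by
        have : M₂ (t • x₁ + s • x₂) + c₂ = t • (M₂ x₁ + c₂) + s • (M₂ x₂ + c₂) := by
          rw [map_add, map_smul, map_smul]
          match_scalars <;> linarith
        rw [this, map_add, map_smul, map_smul]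
      have eD : D (t • L (M₂ x₁ + c₂) + s • L (M₂ x₂ + c₂))
          = t • D (L (M₂ x₁ + c₂)) + s • D (L (M₂ x₂ + c₂)) := by
        rw [map_add, map_smul, map_smul]
      have h1 := aux_comb_sq (M₁ x₁ + c₁) (M₁ x₂ + c₁) hts
      have h2 := aux_comb_sq (D (L (M₂ x₁ + c₂))) (D (L (M₂ x₂ + c₂))) hts
      have eA : (M₁ x₁ + c₁) - (M₁ x₂ + c₁) = M₁ (x₁ - x₂) := by
        rw [map_sub]; abel
      have ePd : D (L (M₂ x₁ + c₂)) - D (L (M₂ x₂ + c₂)) = D (L (M₂ (x₁ - x₂))) := by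
        have hsub : (M₂ x₁ + c₂) - (M₂ x₂ + c₂) = M₂ (x₁ - x₂) := by rw [map_sub]; abel
        rw [← map_sub D, ← map_sub L, hsub]
      rw [eA] at h1
      rw [ePd] at h2
      have h3 := hsp (x₁ - x₂)
      have h4 := hφ.2 (Set.mem_univ (L (M₂ x₁ + c₂))) (Set.mem_univ (L (M₂ x₂ + c₂))) ht hs hts
      simp only [smul_eq_mul] at h4
      rw [eD] at h4
      have h4μ := mul_le_mul_of_nonneg_left h4 hμ.le
      have h3ts := mul_le_mul_of_nonneg_left h3 (mul_nonneg ht hs)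
      have h2μ : μ * ‖t • D (L (M₂ x₁ + c₂)) + s • D (L (M₂ x₂ + c₂))‖ ^ 2
          = μ * (t * ‖D (L (M₂ x₁ + c₂))‖ ^ 2 + s * ‖D (L (M₂ x₂ + c₂))‖ ^ 2
            - t * s * ‖D (L (M₂ (x₁ - x₂)))‖ ^ 2) := by rw [h2]
      rw [e1, eL]
      nlinarith [h1, h2μ, h4μ, h3ts]
    refine ⟨fun x => ?_, ⟨0, ?_⟩, ?_, ?_⟩
    · rw [hF x]; exact EReal.coe_ne_bot _
    · rw [hF 0]; exact EReal.coe_ne_top _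
    · have hrw : (fun x : X =>
          ((‖M₁ x + c₁‖ ^ 2 / 2 : ℝ) : EReal) -
            (μ : EReal) * ⨅ v : Z,
              ((⨆ w : C, ((⟪v, (w : Z)⟫ : ℝ) : EReal)) +
                ((‖D (L (M₂ x + c₂) - v)‖ ^ 2 / 2 : ℝ) : EReal)))
          = fun x : X => ((‖M₁ x + c₁‖ ^ 2 / 2 - μ * limesGr D C (L (M₂ x + c₂)) : ℝ) : EReal) :=
        funext hF
      rw [hrw]
      exact (continuous_coe_real_ereal.comp hFcont).lowerSemicontinuous
    · intro p hp p' hp' t s ht hs hts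
      simp only [Set.mem_setOf_eq] at hp hp' ⊢
      rw [hF p.1] at hp
      rw [hF p'.1] at hp'
      have hp1 : (t • p + s • p').1 = t • p.1 + s • p'.1 := rfl
      have hp2 : (t • p + s • p').2 = t * p.2 + s * p'.2 := rfl
      rw [hp1, hp2, hF (t • p.1 + s • p'.1), EReal.coe_le_coe_iff]
      have hq := hQconv p.1 p'.1 t s ht hs hts
      have hr1 := EReal.coe_le_coe_iff.mp hp
      have hr2 := EReal.coe_le_coe_iff.mp hp'
      nlinarith [mul_le_mul_of_nonneg_left hr1 ht, mul_le_mul_of_nonneg_left hr2 hs]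
end
end

section
/- In the LiMES setup with seed function Ψ := ||| · |||, an arbitrary norm on Z, assume that at least one of the following holds: (i) c₂ = 0; (ii) range M₂ = Z; or (iii) 𝒜₂ x̂ = 0 for some x̂ ∈ X. Then the smooth part F(x) := ½‖𝒜₁x‖² − μ·inf_{v∈Z} [ |||v||| + ½‖D(𝓛𝒜₂x − v)‖² ] is a proper lower-semicontinuous convex function on X if and only if condition (♠) holds, i.e., M₁*M₁ − μ M₂*𝓛*D²𝓛M₂ is positive semidefinite. -/
/-!
The infimum `e w = inf_v [N v + ½‖D(w - v)‖²]` is a Moreau envelope: `½‖Dw‖² - e w` is the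
supremum over `v` of the affine functions `w ↦ ⟪Dw, Dv⟫ - N v - ½‖Dv‖²`, hence convex. So `F` is
the quadratic `½‖𝒜₁x‖² - ½μ‖D𝓛𝒜₂x‖²`, which is convex exactly under (♠), plus `μ` times a convex
function of the affine map `𝓛𝒜₂`; a finite convex function on a finite-dimensional space is
continuous.

Conversely, in finite dimension the norm `N` dominates `c‖·‖` for some `c > 0`, so for `w` near `0`
the gain `⟪Dw, Dv⟫` never beats the cost `N v`, the infimum is attained at `v = 0` and
`e w = ½‖Dw‖²`. On the line `t ↦ x̂ + t x` through a zero `x̂` of `𝒜₂`, `F` is then, near `t = 0`, a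
quadratic in `t` with leading coefficient `½(‖M₁x‖² - μ‖D𝓛M₂x‖²)`, and convexity forces it to be
nonnegative.
-/

open scoped RealInnerProductSpace

noncomputable section

open Set Filter Topology

theorem half_norm_sq_combo {E : Type*} [NormedAddCommGroup E] [InnerProductSpace ℝ E]
    (u v : E) {a b : ℝ} (hab : a + b = 1) :
    ‖a • u + b • v‖ ^ 2 / 2 =
      a * (‖u‖ ^ 2 / 2) + b * (‖v‖ ^ 2 / 2) - a * b * (‖u - v‖ ^ 2 / 2) := by
  obtain rfl : b = 1 - a := by linarith
  rw [norm_add_sq_real, norm_sub_sq_real, norm_smul, norm_smul, real_inner_smul_left,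
    real_inner_smul_right, mul_pow, mul_pow, Real.norm_eq_abs, Real.norm_eq_abs, sq_abs, sq_abs]
  ring

theorem ConvexOn.nonneg_of_eventuallyEq_quadratic {f : ℝ → ℝ} (hf : ConvexOn ℝ univ f)
    {α β γ : ℝ} (h : f =ᶠ[𝓝 0] fun t => α + β * t + γ * t ^ 2) : 0 ≤ γ := by
  obtain ⟨δ, hδ, hfδ⟩ := Metric.eventually_nhds_iff.1 h
  set t := δ / 2
  have ht : 0 < t := half_pos hδ
  have htδ : t < δ := half_lt_self hδ
  have hmid := hf.2 (mem_univ t) (mem_univ (-t)) (by norm_num : (0 : ℝ) ≤ 1 / 2)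
    (by norm_num : (0 : ℝ) ≤ 1 / 2) (by norm_num)
  rw [show (1 / 2 : ℝ) • t + (1 / 2 : ℝ) • -t = 0 by ring, smul_eq_mul, smul_eq_mul,
    hfδ (by simpa using hδ), hfδ (by simpa [abs_of_pos ht] using htδ),
    hfδ (by simpa [abs_of_pos ht] using htδ)] at hmid
  nlinarith [pow_pos ht 2]

section AffineQuadratic

variable {X Y : Type*} [AddCommGroup X] [Module ℝ X] [NormedAddCommGroup Y] [InnerProductSpace ℝ Y]

theorem convexOn_half_norm_sq_sub_mul {Z : Type*} [NormedAddCommGroup Z]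
    [InnerProductSpace ℝ Z] (A : X →ᵃ[ℝ] Y) (B : X →ᵃ[ℝ] Z) {μ : ℝ}
    (h : ∀ v, μ * ‖B.linear v‖ ^ 2 ≤ ‖A.linear v‖ ^ 2) :
    ConvexOn ℝ univ fun x => ‖A x‖ ^ 2 / 2 - μ * (‖B x‖ ^ 2 / 2) := by
  refine ⟨convex_univ, fun x _ y _ a b ha hb hab => ?_⟩
  have hxy := h (x - y)
  rw [← vsub_eq_sub, AffineMap.linearMap_vsub, AffineMap.linearMap_vsub, vsub_eq_sub,
    vsub_eq_sub] at hxy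
  simp only [smul_eq_mul, Convex.combo_affine_apply hab, half_norm_sq_combo _ _ hab]
  nlinarith [mul_le_mul_of_nonneg_left hxy (mul_nonneg ha hb)]

theorem le_of_convexOn_half_norm_sq_sub_mul {Z W : Type*} [NormedAddCommGroup Z]
    [NormedSpace ℝ Z] [NormedAddCommGroup W] [InnerProductSpace ℝ W]
    (A : X →ᵃ[ℝ] Y) (B : X →ᵃ[ℝ] Z) {x₀ : X} (hx₀ : B x₀ = 0) {φ : Z → ℝ} {T : Z →ₗ[ℝ] W}
    (hφ : φ =ᶠ[𝓝 0] fun w => ‖T w‖ ^ 2 / 2) {μ : ℝ}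
    (hconv : ConvexOn ℝ univ fun x => ‖A x‖ ^ 2 / 2 - μ * φ (B x)) (v : X) :
    μ * ‖T (B.linear v)‖ ^ 2 ≤ ‖A.linear v‖ ^ 2 := by
  set g : ℝ →ᵃ[ℝ] X := AffineMap.lineMap x₀ (v + x₀)
  have hg : ∀ t : ℝ, g t = t • v +ᵥ x₀ := fun t => by
    simp [g, AffineMap.lineMap_apply_module']
  have hAg : ∀ t : ℝ, A (g t) = t • A.linear v + A x₀ := fun t => by
    rw [hg, A.map_vadd, map_smul, vadd_eq_add]
  have hBg : ∀ t : ℝ, B (g t) = t • B.linear v := fun t => by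
    rw [hg, B.map_vadd, map_smul, hx₀, vadd_eq_add, add_zero]
  have hline : Tendsto (fun t : ℝ => t • B.linear v) (𝓝 0) (𝓝 0) :=
    (continuous_id.smul continuous_const).tendsto' 0 0 (zero_smul ℝ _)
  have hquad : (fun x => ‖A x‖ ^ 2 / 2 - μ * φ (B x)) ∘ g =ᶠ[𝓝 0] fun t =>
      ‖A x₀‖ ^ 2 / 2 + ⟪A.linear v, A x₀⟫ * t +
        (‖A.linear v‖ ^ 2 - μ * ‖T (B.linear v)‖ ^ 2) / 2 * t ^ 2 := by
    filter_upwards [hline.eventually hφ] with t ht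
    rw [Function.comp_apply, hAg, hBg, ht, norm_add_sq_real, map_smul, norm_smul, norm_smul,
      real_inner_smul_left, mul_pow, mul_pow, Real.norm_eq_abs, sq_abs]
    ring
  linarith [(hconv.comp_affineMap g).nonneg_of_eventuallyEq_quadratic hquad]

end AffineQuadratic

section MoreauEnvelope

variable {Z W : Type*} [AddCommGroup Z] [Module ℝ Z] [NormedAddCommGroup W]
  [InnerProductSpace ℝ W]

def moreauEnvelope (N : Z → ℝ) (T : Z →ₗ[ℝ] W) (w : Z) : ℝ :=
  ⨅ v, (N v + ‖T (w - v)‖ ^ 2 / 2)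

variable {N : Z → ℝ} {T : Z →ₗ[ℝ] W}

theorem moreauEnvelope_sub_half_norm_sq_le (hN : BddBelow (range N)) (w v : Z) :
    moreauEnvelope N T w - ‖T w‖ ^ 2 / 2 ≤ N v - ⟪T w, T v⟫ + ‖T v‖ ^ 2 / 2 := by
  obtain ⟨m, hm⟩ := hN
  have hbdd : BddBelow (range fun u => N u + ‖T (w - u)‖ ^ 2 / 2) :=
    ⟨m, forall_mem_range.2 fun u => le_add_of_le_of_nonneg (hm ⟨u, rfl⟩) (by positivity)⟩
  have := ciInf_le hbdd v
  rw [map_sub, norm_sub_sq_real] at this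
  unfold moreauEnvelope
  linarith

theorem convexOn_half_norm_sq_sub_moreauEnvelope (hN : BddBelow (range N)) :
    ConvexOn ℝ univ fun w => ‖T w‖ ^ 2 / 2 - moreauEnvelope N T w := by
  refine ⟨convex_univ, fun w _ w' _ a b ha hb hab => ?_⟩
  have hcomb : a * (moreauEnvelope N T w - ‖T w‖ ^ 2 / 2) +
      b * (moreauEnvelope N T w' - ‖T w'‖ ^ 2 / 2) + ‖T (a • w + b • w')‖ ^ 2 / 2 ≤
      moreauEnvelope N T (a • w + b • w') := by
    refine le_ciInf fun v => ?_
    have h₁ := mul_le_mul_of_nonneg_left (moreauEnvelope_sub_half_norm_sq_le (T := T) hN w v) ha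
    have h₂ := mul_le_mul_of_nonneg_left (moreauEnvelope_sub_half_norm_sq_le (T := T) hN w' v) hb
    rw [map_sub, norm_sub_sq_real, map_add, map_smul, map_smul, inner_add_left,
      real_inner_smul_left, real_inner_smul_left]
    obtain rfl : b = 1 - a := by linarith
    nlinarith
  simp only [smul_eq_mul]
  linarith

theorem moreauEnvelope_eq_half_norm_sq (hN0 : N 0 = 0) {w : Z}
    (h : ∀ v, ⟪T w, T v⟫ ≤ N v) : moreauEnvelope N T w = ‖T w‖ ^ 2 / 2 := by
  have hle : ∀ v, ‖T w‖ ^ 2 / 2 ≤ N v + ‖T (w - v)‖ ^ 2 / 2 := fun v => by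
    rw [map_sub, norm_sub_sq_real]
    nlinarith [h v, sq_nonneg ‖T v‖]
  refine le_antisymm ?_ (le_ciInf hle)
  exact (ciInf_le ⟨_, forall_mem_range.2 hle⟩ 0).trans_eq (by simp [hN0])

end MoreauEnvelope

theorem eventually_moreauEnvelope_eq_half_norm_sq {Z W : Type*} [NormedAddCommGroup Z]
    [NormedSpace ℝ Z] [FiniteDimensional ℝ Z] [NormedAddCommGroup W] [InnerProductSpace ℝ W]
    {N : Z → ℝ} {c : ℝ} (hc : 0 < c) (hN0 : N 0 = 0) (hcN : ∀ v, c * ‖v‖ ≤ N v)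
    (T : Z →ₗ[ℝ] W) : ∀ᶠ w in 𝓝 0, moreauEnvelope N T w = ‖T w‖ ^ 2 / 2 := by
  set T' := LinearMap.toContinuousLinearMap T
  have hlim : Tendsto (fun w => ‖T' w‖ * ‖T'‖) (𝓝 0) (𝓝 0) := by
    simpa using (T'.continuous.norm.mul_const ‖T'‖).tendsto 0
  filter_upwards [hlim.eventually (eventually_lt_nhds hc)] with w hw
  refine moreauEnvelope_eq_half_norm_sq hN0 fun v => ?_
  calc ⟪T w, T v⟫ ≤ ‖T' w‖ * ‖T' v‖ := real_inner_le_norm _ _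
    _ ≤ ‖T' w‖ * (‖T'‖ * ‖v‖) := by gcongr; exact T'.le_opNorm v
    _ ≤ c * ‖v‖ := by rw [← mul_assoc]; gcongr
    _ ≤ N v := hcN v

theorem Seminorm.exists_pos_mul_norm_le {Z : Type*} [NormedAddCommGroup Z] [NormedSpace ℝ Z]
    [FiniteDimensional ℝ Z] (p : Seminorm ℝ Z) (hp : ∀ z, p z = 0 → z = 0) :
    ∃ c > 0, ∀ v, c * ‖v‖ ≤ p v := by
  rcases subsingleton_or_nontrivial Z with hZ | hZ
  · exact ⟨1, one_pos, fun v => by simp [Subsingleton.elim v 0]⟩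
  obtain ⟨z, hz, hmin⟩ := (isCompact_sphere (0 : Z) 1).exists_isMinOn
    (NormedSpace.sphere_nonempty.2 zero_le_one) p.convexOn.locallyLipschitz.continuous.continuousOn
  have hz0 : z ≠ 0 := ne_zero_of_mem_unit_sphere ⟨z, hz⟩
  refine ⟨p z, (apply_nonneg p z).lt_of_ne' (mt (hp z) hz0), fun v => ?_⟩
  rcases eq_or_ne v 0 with rfl | hv
  · simp
  have hvz : p z ≤ ‖v‖⁻¹ * p v := by
    simpa [map_smul_eq_mul] using hmin (a := ‖v‖⁻¹ • v) (by simp [norm_smul, hv])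
  rwa [← le_div_iff₀ (norm_pos_iff.2 hv), div_eq_inv_mul]

theorem limes_norm_seed_convexity_iff_general
    {X Y Z : Type*}
    [NormedAddCommGroup X] [InnerProductSpace ℝ X] [FiniteDimensional ℝ X]
    [NormedAddCommGroup Y] [InnerProductSpace ℝ Y]
    [NormedAddCommGroup Z] [InnerProductSpace ℝ Z] [FiniteDimensional ℝ Z]
    (M₁ : X →ₗ[ℝ] Y) (M₂ : X →ₗ[ℝ] Z)
    (c₁ : Y) (c₂ : Z) (L : Z →ₗ[ℝ] Z)
    (D : Z →ₗ[ℝ] Z)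
    (μ : ℝ) (hμ : 0 < μ)
    (N : Z → ℝ) (hN1 : ∀ (a : ℝ) (z : Z), N (a • z) = |a| * N z)
    (hN2 : ∀ z w : Z, N (z + w) ≤ N z + N w)
    (hN3 : ∀ z : Z, N z = 0 → z = 0)
    (hcase : c₂ = 0 ∨ Function.Surjective M₂ ∨ ∃ xhat : X, M₂ xhat + c₂ = 0) :
    (LowerSemicontinuous (fun x : X =>
        ‖M₁ x + c₁‖ ^ 2 / 2 -
          μ * ⨅ v : Z, (N v + ‖D (L (M₂ x + c₂) - v)‖ ^ 2 / 2)) ∧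
      ConvexOn ℝ Set.univ (fun x : X =>
        ‖M₁ x + c₁‖ ^ 2 / 2 -
          μ * ⨅ v : Z, (N v + ‖D (L (M₂ x + c₂) - v)‖ ^ 2 / 2)))
    ↔ (∀ x : X, μ * ‖D (L (M₂ x))‖ ^ 2 ≤ ‖M₁ x‖ ^ 2) := by
  let p : Seminorm ℝ Z := .of N hN2 fun a z => by rw [hN1, Real.norm_eq_abs]
  let A : X →ᵃ[ℝ] Y := M₁.toAffineMap + AffineMap.const ℝ X c₁
  let B : X →ᵃ[ℝ] Z := L.toAffineMap.comp (M₂.toAffineMap + AffineMap.const ℝ X c₂)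
  change (LowerSemicontinuous fun x => ‖A x‖ ^ 2 / 2 - μ * moreauEnvelope p D (B x)) ∧
      ConvexOn ℝ univ (fun x => ‖A x‖ ^ 2 / 2 - μ * moreauEnvelope p D (B x)) ↔ _
  constructor
  · rintro ⟨-, hconv⟩ x
    obtain ⟨x₀, hx₀⟩ : ∃ x₀, M₂ x₀ + c₂ = 0 := by
      rcases hcase with rfl | hsurj | hzero
      · exact ⟨0, by simp⟩
      · obtain ⟨x₀, hx₀⟩ := hsurj (-c₂)
        exact ⟨x₀, by simp [hx₀]⟩
      · exact hzero
    obtain ⟨c, hc, hcp⟩ := p.exists_pos_mul_norm_le hN3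
    have hBx₀ : B x₀ = 0 := by simp [B, -map_add, hx₀]
    simpa [A, B] using le_of_convexOn_half_norm_sq_sub_mul A B hBx₀
      (eventually_moreauEnvelope_eq_half_norm_sq hc (map_zero p) hcp D) hconv x
  · intro h
    have hquad := convexOn_half_norm_sq_sub_mul A (D.toAffineMap.comp B) (μ := μ)
      (by simpa [A, B] using h)
    have henv := (convexOn_half_norm_sq_sub_moreauEnvelope (T := D)
      ⟨0, forall_mem_range.2 (apply_nonneg p)⟩).comp_affineMap B
    have hconv : ConvexOn ℝ univ fun x => ‖A x‖ ^ 2 / 2 - μ * moreauEnvelope p D (B x) :=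
      (hquad.add (henv.smul hμ.le)).congr fun x _ => by
        simp only [Pi.add_apply, smul_eq_mul, Function.comp_apply, AffineMap.coe_comp,
          LinearMap.coe_toAffineMap]
        ring
    exact ⟨hconv.locallyLipschitz.continuous.lowerSemicontinuous, hconv⟩

/-- Corollary 1 of the paper.  In the LiMES setup with seed function
an arbitrary norm `N` on `Z`, assuming (i) `c₂ = 0`, (ii) `M₂` surjective, or
(iii) `𝒜₂x̂ = 0` for some `x̂`, the smooth part
`F(x) = ½‖𝒜₁x‖² − μ·inf_v [N(v) + ½‖D(𝓛𝒜₂x − v)‖²]` (here real-valued, so properness is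
automatic) is a proper lower-semicontinuous convex function on `X` if and only if
condition (♠) holds: `μ‖D𝓛M₂x‖² ≤ ‖M₁x‖²` for all `x`. -/
theorem limes_norm_seed_convexity_iff
    {X Y Z : Type*}
    [NormedAddCommGroup X] [InnerProductSpace ℝ X] [FiniteDimensional ℝ X]
    [NormedAddCommGroup Y] [InnerProductSpace ℝ Y] [FiniteDimensional ℝ Y]
    [NormedAddCommGroup Z] [InnerProductSpace ℝ Z] [FiniteDimensional ℝ Z]
    (M₁ : X →ₗ[ℝ] Y) (hM₁ : M₁ ≠ 0) (M₂ : X →ₗ[ℝ] Z) (hM₂ : M₂ ≠ 0)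
    (c₁ : Y) (c₂ : Z) (L : Z →ₗ[ℝ] Z) (hL : L ≠ 0)
    (D : Z →ₗ[ℝ] Z) (hDsa : ∀ u v : Z, ⟪D u, v⟫ = ⟪u, D v⟫)
    (hDpd : ∀ z : Z, z ≠ 0 → 0 < ⟪D z, z⟫)
    (μ : ℝ) (hμ : 0 < μ)
    (N : Z → ℝ) (hN1 : ∀ (a : ℝ) (z : Z), N (a • z) = |a| * N z)
    (hN2 : ∀ z w : Z, N (z + w) ≤ N z + N w)
    (hN3 : ∀ z : Z, N z = 0 → z = 0)
    (hcase : c₂ = 0 ∨ Function.Surjective M₂ ∨ ∃ xhat : X, M₂ xhat + c₂ = 0) :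
    (LowerSemicontinuous (fun x : X =>
        ‖M₁ x + c₁‖ ^ 2 / 2 -
          μ * ⨅ v : Z, (N v + ‖D (L (M₂ x + c₂) - v)‖ ^ 2 / 2)) ∧
      ConvexOn ℝ Set.univ (fun x : X =>
        ‖M₁ x + c₁‖ ^ 2 / 2 -
          μ * ⨅ v : Z, (N v + ‖D (L (M₂ x + c₂) - v)‖ ^ 2 / 2)))
    ↔ (∀ x : X, μ * ‖D (L (M₂ x))‖ ^ 2 ≤ ‖M₁ x‖ ^ 2) :=
  limes_norm_seed_convexity_iff_general M₁ M₂ c₁ c₂ L D μ hμ N hN1 hN2 hN3 hcase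
end
end

section
/- Let n, m ∈ ℕ*, μ_L, μ_S, γ > 0, Y ∈ ℝ^{n×m}, and let Ψ be any norm on the Hilbert space ℝ^{n×m} × ℝ^{n×m} equipped with the Frobenius inner product. Let D(L, S) := (√(μ_L/γ) L, √(μ_S/γ) S) and let P(L, S) := ((L+S)/2, (L+S)/2), the orthogonal projection onto the subspace M₁ := { (X, X) : X ∈ ℝ^{n×m} }. Define F(L, S) := ½‖L + S − Y‖_F² − inf_{(V,W)} [ Ψ(V, W) + ½‖D(P(L,S) − (V,W))‖_F² ]. Then F is convex if and only if μ_L + μ_S ≤ 4γ. -/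
noncomputable section

/-- Squared Frobenius norm of a real matrix. -/
def frobSq {n m : ℕ} (A : Matrix (Fin n) (Fin m) ℝ) : ℝ := ∑ i, ∑ j, (A i j) ^ 2

namespace SPCPaux

variable {n m : ℕ}

/-- Frobenius inner product. -/
def ipF (A B : Matrix (Fin n) (Fin m) ℝ) : ℝ := ∑ i, ∑ j, A i j * B i j

/-- Elementary matrix with a single 1 entry. -/
def eMat (i0 : Fin n) (j0 : Fin m) : Matrix (Fin n) (Fin m) ℝ :=
  fun i j => if i = i0 then (if j = j0 then 1 else 0) else 0

/-- The smooth part of the objective, with the data `D(P(L,S)) - D(q)` squared. -/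
def phiF (Ψ : Matrix (Fin n) (Fin m) ℝ × Matrix (Fin n) (Fin m) ℝ → ℝ) (a b : ℝ)
    (X : Matrix (Fin n) (Fin m) ℝ)
    (q : Matrix (Fin n) (Fin m) ℝ × Matrix (Fin n) (Fin m) ℝ) : ℝ :=
  Ψ q + (a * frobSq ((2:ℝ)⁻¹ • X - q.1) + b * frobSq ((2:ℝ)⁻¹ • X - q.2)) / 2

lemma frobSq_nonneg (A : Matrix (Fin n) (Fin m) ℝ) : 0 ≤ frobSq A :=
  Finset.sum_nonneg fun _ _ => Finset.sum_nonneg fun _ _ => sq_nonneg _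

lemma frobSq_smul (c : ℝ) (A : Matrix (Fin n) (Fin m) ℝ) :
    frobSq (c • A) = c ^ 2 * frobSq A := by
  simp [frobSq, Matrix.smul_apply, smul_eq_mul, mul_pow, Finset.mul_sum]

lemma frobSq_neg (A : Matrix (Fin n) (Fin m) ℝ) : frobSq (-A) = frobSq A := by
  simp [frobSq, Matrix.neg_apply]

lemma frobSq_combo (s t : ℝ) (h : s + t = 1) (A B : Matrix (Fin n) (Fin m) ℝ) :
    frobSq (s • A + t • B) = s * frobSq A + t * frobSq B - s * t * frobSq (A - B) := by
  calc frobSq (s • A + t • B)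
      = ∑ i, ∑ j, (s * (A i j) ^ 2 + t * (B i j) ^ 2 - s * t * (A i j - B i j) ^ 2) := by
        refine Finset.sum_congr rfl fun i _ => Finset.sum_congr rfl fun j _ => ?_
        simp only [Matrix.add_apply, Matrix.smul_apply, smul_eq_mul]
        linear_combination ((A i j) ^ 2 * s + (B i j) ^ 2 * t) * h
    _ = (∑ i, ∑ j, s * (A i j) ^ 2) + (∑ i, ∑ j, t * (B i j) ^ 2)
          - ∑ i, ∑ j, s * t * (A i j - B i j) ^ 2 := by
        simp [Finset.sum_add_distrib, Finset.sum_sub_distrib]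
    _ = s * frobSq A + t * frobSq B - s * t * frobSq (A - B) := by
        simp [frobSq, ← Finset.mul_sum, Matrix.sub_apply]

lemma frobSq_sub_expand (A B : Matrix (Fin n) (Fin m) ℝ) :
    frobSq (A - B) = frobSq A - 2 * ipF A B + frobSq B := by
  calc frobSq (A - B)
      = ∑ i, ∑ j, ((A i j) ^ 2 - 2 * (A i j * B i j) + (B i j) ^ 2) := by
        refine Finset.sum_congr rfl fun i _ => Finset.sum_congr rfl fun j _ => ?_
        simp only [Matrix.sub_apply]; ring
    _ = (∑ i, ∑ j, (A i j) ^ 2) - 2 * (∑ i, ∑ j, A i j * B i j) + ∑ i, ∑ j, (B i j) ^ 2 := by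
        simp [Finset.sum_add_distrib, Finset.sum_sub_distrib, Finset.mul_sum]
    _ = frobSq A - 2 * ipF A B + frobSq B := rfl

lemma frobSq_mirror (A B : Matrix (Fin n) (Fin m) ℝ) :
    frobSq (A - B) + frobSq (-A - B) = 2 * frobSq A + 2 * frobSq B := by
  have h1 := frobSq_sub_expand A B
  have h2 := frobSq_sub_expand (-A) B
  have h3 : frobSq (-A) = frobSq A := frobSq_neg A
  have h4 : ipF (-A) B = - ipF A B := by
    simp [ipF, Matrix.neg_apply, Finset.sum_neg_distrib]
  rw [h1, h2, h3, h4]; ring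

lemma ipF_smul (c : ℝ) (A B : Matrix (Fin n) (Fin m) ℝ) :
    ipF (c • A) B = c * ipF A B := by
  simp [ipF, Matrix.smul_apply, smul_eq_mul, Finset.mul_sum, mul_assoc]

lemma frobSq_eMat (i0 : Fin n) (j0 : Fin m) : frobSq (eMat i0 j0) = 1 := by
  simp [frobSq, eMat, apply_ite (· ^ (2:ℕ)), Finset.sum_ite_eq']

lemma ipF_eMat (i0 : Fin n) (j0 : Fin m) (B : Matrix (Fin n) (Fin m) ℝ) :
    ipF (eMat i0 j0) B = B i0 j0 := by
  simp [ipF, eMat, ite_mul, Finset.sum_ite_eq']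

lemma sq_entry_le_frobSq (A : Matrix (Fin n) (Fin m) ℝ) (i0 : Fin n) (j0 : Fin m) :
    (A i0 j0) ^ 2 ≤ frobSq A := by
  have h1 : (A i0 j0) ^ 2 ≤ ∑ j, (A i0 j) ^ 2 :=
    Finset.single_le_sum (f := fun j => (A i0 j) ^ 2) (fun j _ => sq_nonneg _)
      (Finset.mem_univ j0)
  exact h1.trans (Finset.single_le_sum (f := fun i => ∑ j, (A i j) ^ 2)
    (fun i _ => Finset.sum_nonneg fun j _ => sq_nonneg _) (Finset.mem_univ i0))

section FrobNorm
attribute [local instance] Matrix.frobeniusNormedAddCommGroup Matrix.frobeniusNormedSpace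

lemma frob_norm_eq (A : Matrix (Fin n) (Fin m) ℝ) : ‖A‖ = Real.sqrt (frobSq A) := by
  rw [Matrix.frobenius_norm_def, Real.sqrt_eq_rpow]
  congr 1
  refine Finset.sum_congr rfl fun i _ => Finset.sum_congr rfl fun j _ => ?_
  rw [Real.norm_eq_abs, show ((2:ℝ) = ((2:ℕ):ℝ)) by norm_num, Real.rpow_natCast, sq_abs]

lemma abs_entry_le_norm (q : Matrix (Fin n) (Fin m) ℝ × Matrix (Fin n) (Fin m) ℝ)
    (i0 : Fin n) (j0 : Fin m) :
    |q.1 i0 j0| ≤ ‖q‖ ∧ |q.2 i0 j0| ≤ ‖q‖ := by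
  constructor
  · calc |q.1 i0 j0| = Real.sqrt ((q.1 i0 j0) ^ 2) := (Real.sqrt_sq_eq_abs _).symm
      _ ≤ Real.sqrt (frobSq q.1) := Real.sqrt_le_sqrt (sq_entry_le_frobSq _ _ _)
      _ = ‖q.1‖ := (frob_norm_eq _).symm
      _ ≤ ‖q‖ := norm_fst_le q
  · calc |q.2 i0 j0| = Real.sqrt ((q.2 i0 j0) ^ 2) := (Real.sqrt_sq_eq_abs _).symm
      _ ≤ Real.sqrt (frobSq q.2) := Real.sqrt_le_sqrt (sq_entry_le_frobSq _ _ _)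
      _ = ‖q.2‖ := (frob_norm_eq _).symm
      _ ≤ ‖q‖ := norm_snd_le q

end FrobNorm

/-- A norm-like function on a nontrivial finite-dimensional real normed space is
bounded below by a positive multiple of the norm. -/
lemma seminorm_lb {E : Type*} [NormedAddCommGroup E] [NormedSpace ℝ E]
    [FiniteDimensional ℝ E] [Nontrivial E] (Ψ : E → ℝ)
    (h1 : ∀ (a : ℝ) x, Ψ (a • x) = |a| * Ψ x)
    (h2 : ∀ x y, Ψ (x + y) ≤ Ψ x + Ψ y)
    (h3 : ∀ x, Ψ x = 0 → x = 0) :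
    ∃ c > 0, ∀ x, c * ‖x‖ ≤ Ψ x := by
  have h0 : Ψ 0 = 0 := by simpa using h1 0 0
  have hconv : ConvexOn ℝ Set.univ Ψ := by
    refine ⟨convex_univ, fun x _ y _ s t hs ht hst => ?_⟩
    calc Ψ (s • x + t • y) ≤ Ψ (s • x) + Ψ (t • y) := h2 _ _
      _ = s * Ψ x + t * Ψ y := by rw [h1, h1, abs_of_nonneg hs, abs_of_nonneg ht]
  have hcont : Continuous Ψ := by
    have := hconv.continuousOn isOpen_univ
    rwa [← continuousOn_univ]
  obtain ⟨x₀, hx₀, hmin⟩ := (isCompact_sphere (0:E) 1).exists_isMinOn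
    (NormedSpace.sphere_nonempty.mpr zero_le_one) hcont.continuousOn
  have hx₀1 : ‖x₀‖ = 1 := mem_sphere_zero_iff_norm.mp hx₀
  have hnn : ∀ x, 0 ≤ Ψ x := by
    intro x
    have hneg : Ψ (-x) = Ψ x := by simpa using h1 (-1) x
    have := h2 x (-x)
    rw [add_neg_cancel, h0, hneg] at this
    linarith
  have hc : 0 < Ψ x₀ := by
    rcases (hnn x₀).lt_or_eq with h | h
    · exact h
    · exfalso
      have : x₀ = 0 := h3 x₀ h.symm
      rw [this] at hx₀1; simp at hx₀1
  refine ⟨Ψ x₀, hc, fun x => ?_⟩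
  rcases eq_or_ne x 0 with rfl | hx
  · simp [h0]
  · have hnx : (0:ℝ) < ‖x‖ := norm_pos_iff.mpr hx
    have hmem : ‖x‖⁻¹ • x ∈ Metric.sphere (0:E) 1 := by
      simp [norm_smul, abs_of_pos (inv_pos.mpr hnx), inv_mul_cancel₀ hnx.ne']
    have hle : Ψ x₀ ≤ Ψ (‖x‖⁻¹ • x) := hmin hmem
    have heq : Ψ (‖x‖⁻¹ • x) = ‖x‖⁻¹ * Ψ x := by
      rw [h1, abs_of_pos (inv_pos.mpr hnx)]
    rw [heq] at hle
    calc Ψ x₀ * ‖x‖ ≤ (‖x‖⁻¹ * Ψ x) * ‖x‖ := by nlinarith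
      _ = Ψ x := by field_simp

end SPCPaux

open SPCPaux

set_option maxHeartbeats 1600000 in
/-- Proposition 6 of the paper, convexity condition for SPCP.
With `D(L,S) = (√(μ_L/γ)L, √(μ_S/γ)S)`, `P(L,S) = ((L+S)/2, (L+S)/2)` (the orthogonal
projection onto `{(X,X)}`), and `Ψ` an arbitrary norm on the matrix-pair space,
`F(L,S) = ½‖L+S−Y‖_F² − inf_{(V,W)} [Ψ(V,W) + ½‖D(P(L,S) − (V,W))‖_F²]`
is convex if and only if `μ_L + μ_S ≤ 4γ`. -/
theorem spcp_convexity_condition (n m : ℕ) (hn : 0 < n) (hm : 0 < m)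
    (μL μS γ : ℝ) (hμL : 0 < μL) (hμS : 0 < μS) (hγ : 0 < γ)
    (Y : Matrix (Fin n) (Fin m) ℝ)
    (Ψ : Matrix (Fin n) (Fin m) ℝ × Matrix (Fin n) (Fin m) ℝ → ℝ)
    (hΨ1 : ∀ (a : ℝ) p, Ψ (a • p) = |a| * Ψ p)
    (hΨ2 : ∀ p q, Ψ (p + q) ≤ Ψ p + Ψ q)
    (hΨ3 : ∀ p, Ψ p = 0 → p = 0) :
    ConvexOn ℝ Set.univ
        (fun p : Matrix (Fin n) (Fin m) ℝ × Matrix (Fin n) (Fin m) ℝ =>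
          frobSq (p.1 + p.2 - Y) / 2 -
            ⨅ q : Matrix (Fin n) (Fin m) ℝ × Matrix (Fin n) (Fin m) ℝ,
              (Ψ q +
                (frobSq (Real.sqrt (μL / γ) • ((2 : ℝ)⁻¹ • (p.1 + p.2) - q.1)) +
                  frobSq (Real.sqrt (μS / γ) • ((2 : ℝ)⁻¹ • (p.1 + p.2) - q.2))) / 2))
      ↔ μL + μS ≤ 4 * γ := by
  have ha : (0:ℝ) < μL / γ := div_pos hμL hγ
  have hb : (0:ℝ) < μS / γ := div_pos hμS hγ
  set a := μL / γ with ha_def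
  set b := μS / γ with hb_def
  have hsa : Real.sqrt a ^ 2 = a := Real.sq_sqrt ha.le
  have hsb : Real.sqrt b ^ 2 = b := Real.sq_sqrt hb.le
  have hΨ0 : Ψ 0 = 0 := by simpa using hΨ1 0 0
  have hΨnn : ∀ q, 0 ≤ Ψ q := by
    intro q
    have hneg : Ψ (-q) = Ψ q := by simpa using hΨ1 (-1) q
    have := hΨ2 q (-q)
    rw [add_neg_cancel, hΨ0, hneg] at this
    linarith
  -- rewrite the objective in terms of `phiF`
  have hfun : (fun p : Matrix (Fin n) (Fin m) ℝ × Matrix (Fin n) (Fin m) ℝ =>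
          frobSq (p.1 + p.2 - Y) / 2 -
            ⨅ q : Matrix (Fin n) (Fin m) ℝ × Matrix (Fin n) (Fin m) ℝ,
              (Ψ q +
                (frobSq (Real.sqrt a • ((2 : ℝ)⁻¹ • (p.1 + p.2) - q.1)) +
                  frobSq (Real.sqrt b • ((2 : ℝ)⁻¹ • (p.1 + p.2) - q.2))) / 2))
      = (fun p : Matrix (Fin n) (Fin m) ℝ × Matrix (Fin n) (Fin m) ℝ =>
          frobSq (p.1 + p.2 - Y) / 2 - ⨅ q, phiF Ψ a b (p.1 + p.2) q) := by
    funext p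
    congr 1
    refine iInf_congr fun q => ?_
    rw [frobSq_smul, frobSq_smul, hsa, hsb]
    rfl
  rw [hfun]
  have hφnn : ∀ X q, 0 ≤ phiF Ψ a b X q := by
    intro X q
    have := frobSq_nonneg ((2:ℝ)⁻¹ • X - q.1)
    have := frobSq_nonneg ((2:ℝ)⁻¹ • X - q.2)
    have := hΨnn q
    unfold phiF
    nlinarith [ha.le, hb.le, mul_nonneg ha.le (frobSq_nonneg ((2:ℝ)⁻¹ • X - q.1)),
      mul_nonneg hb.le (frobSq_nonneg ((2:ℝ)⁻¹ • X - q.2))]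
  have hbdd : ∀ X, BddBelow (Set.range (phiF Ψ a b X)) := by
    intro X
    exact ⟨0, by rintro r ⟨q, rfl⟩; exact hφnn X q⟩
  constructor
  · -- necessity
    intro hF
    letI : NormedAddCommGroup (Matrix (Fin n) (Fin m) ℝ) := Matrix.frobeniusNormedAddCommGroup
    letI : NormedSpace ℝ (Matrix (Fin n) (Fin m) ℝ) := Matrix.frobeniusNormedSpace
    set i0 : Fin n := ⟨0, hn⟩
    set j0 : Fin m := ⟨0, hm⟩
    set E₀ : Matrix (Fin n) (Fin m) ℝ := eMat i0 j0 with hE₀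
    have hE₀ne : E₀ ≠ 0 := by
      intro h
      have := congrFun (congrFun h i0) j0
      simp [hE₀, eMat] at this
    haveI : Nontrivial (Matrix (Fin n) (Fin m) ℝ) := ⟨E₀, 0, hE₀ne⟩
    obtain ⟨c, hc, hcΨ⟩ := seminorm_lb Ψ hΨ1 hΨ2 hΨ3
    -- exact value of the envelope for small multiples of E₀
    have henv : ∀ r : ℝ, |r| * (a + b) ≤ 2 * c →
        (⨅ q, phiF Ψ a b (r • E₀) q) = (a + b) / 8 * r ^ 2 := by
      intro r hr
      apply le_antisymm
      · have h0 : phiF Ψ a b (r • E₀) 0 = (a + b) / 8 * r ^ 2 := by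
          unfold phiF
          rw [Prod.fst_zero, Prod.snd_zero, sub_zero, smul_smul, frobSq_smul, frobSq_eMat, hΨ0]
          ring
        exact h0 ▸ ciInf_le (hbdd _) 0
      · refine le_ciInf fun q => ?_
        have e1 : frobSq ((2:ℝ)⁻¹ • (r • E₀) - q.1)
            = ((2:ℝ)⁻¹ * r) ^ 2 - 2 * ((2:ℝ)⁻¹ * r * q.1 i0 j0) + frobSq q.1 := by
          rw [smul_smul, frobSq_sub_expand, ipF_smul, ipF_eMat, frobSq_smul, frobSq_eMat]
          ring
        have e2 : frobSq ((2:ℝ)⁻¹ • (r • E₀) - q.2)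
            = ((2:ℝ)⁻¹ * r) ^ 2 - 2 * ((2:ℝ)⁻¹ * r * q.2 i0 j0) + frobSq q.2 := by
          rw [smul_smul, frobSq_sub_expand, ipF_smul, ipF_eMat, frobSq_smul, frobSq_eMat]
          ring
        have hq1 : |q.1 i0 j0| ≤ ‖q‖ := (abs_entry_le_norm q i0 j0).1
        have hq2 : |q.2 i0 j0| ≤ ‖q‖ := (abs_entry_le_norm q i0 j0).2
        have hΨq : c * ‖q‖ ≤ Ψ q := hcΨ q
        have hqn : (0:ℝ) ≤ ‖q‖ := norm_nonneg q
        have k1 : r * (a * q.1 i0 j0) ≤ |r| * (a * |q.1 i0 j0|) := by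
          calc r * (a * q.1 i0 j0) ≤ |r * (a * q.1 i0 j0)| := le_abs_self _
            _ = |r| * (a * |q.1 i0 j0|) := by rw [abs_mul, abs_mul, abs_of_pos ha]
        have k2 : r * (b * q.2 i0 j0) ≤ |r| * (b * |q.2 i0 j0|) := by
          calc r * (b * q.2 i0 j0) ≤ |r * (b * q.2 i0 j0)| := le_abs_self _
            _ = |r| * (b * |q.2 i0 j0|) := by rw [abs_mul, abs_mul, abs_of_pos hb]
        have k3 : |r| * (a * |q.1 i0 j0|) ≤ |r| * (a * ‖q‖) :=
          mul_le_mul_of_nonneg_left (mul_le_mul_of_nonneg_left hq1 ha.le) (abs_nonneg r)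
        have k4 : |r| * (b * |q.2 i0 j0|) ≤ |r| * (b * ‖q‖) :=
          mul_le_mul_of_nonneg_left (mul_le_mul_of_nonneg_left hq2 hb.le) (abs_nonneg r)
        have k5 : (|r| * (a + b)) * ‖q‖ ≤ (2 * c) * ‖q‖ :=
          mul_le_mul_of_nonneg_right hr hqn
        unfold phiF
        rw [e1, e2]
        nlinarith [mul_nonneg ha.le (frobSq_nonneg q.1), mul_nonneg hb.le (frobSq_nonneg q.2),
          hΨq, k1, k2, k3, k4, k5]
    -- plug the three special points into convexity
    have habpos : (0:ℝ) < a + b := by linarith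
    set ε : ℝ := c / (a + b) with hε_def
    have hε : 0 < ε := div_pos hc habpos
    have hεb : |ε| * (a + b) ≤ 2 * c := by
      rw [abs_of_pos hε, hε_def, div_mul_cancel₀ _ habpos.ne']
      linarith
    have hεb' : |(-ε)| * (a + b) ≤ 2 * c := by rwa [abs_neg]
    have h0b : |(0:ℝ)| * (a + b) ≤ 2 * c := by simp; positivity
    have hcvx := hF.2 (Set.mem_univ ((ε • E₀, (0 : Matrix (Fin n) (Fin m) ℝ))))
      (Set.mem_univ (((-ε) • E₀, (0 : Matrix (Fin n) (Fin m) ℝ))))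
      (by norm_num : (0:ℝ) ≤ 1/2) (by norm_num : (0:ℝ) ≤ 1/2) (by norm_num : (1/2:ℝ) + 1/2 = 1)
    have hmid : (1/2 : ℝ) • ((ε • E₀, (0 : Matrix (Fin n) (Fin m) ℝ)))
        + (1/2 : ℝ) • (((-ε) • E₀, (0 : Matrix (Fin n) (Fin m) ℝ)))
        = (((0:ℝ) • E₀, (0 : Matrix (Fin n) (Fin m) ℝ))) := by
      rw [Prod.smul_mk, Prod.smul_mk, Prod.mk_add_mk, smul_smul, smul_smul, ← add_smul]
      norm_num
    rw [hmid] at hcvx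
    simp only [smul_eq_mul] at hcvx
    rw [add_zero, add_zero, add_zero] at hcvx
    rw [henv ε hεb, henv (-ε) hεb', henv 0 h0b] at hcvx
    have hfe : frobSq ((0:ℝ) • E₀ - Y) = frobSq Y := by
      rw [zero_smul, zero_sub, frobSq_neg]
    rw [hfe] at hcvx
    have hmir : frobSq (ε • E₀ - Y) + frobSq (-(ε • E₀) - Y)
        = 2 * (ε ^ 2) + 2 * frobSq Y := by
      rw [frobSq_mirror, frobSq_smul, frobSq_eMat]; ring
    have hnegsm : ((-ε) • E₀ : Matrix (Fin n) (Fin m) ℝ) = -(ε • E₀) := by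
      rw [neg_smul]
    rw [hnegsm] at hcvx
    have hab4 : a + b ≤ 4 := by nlinarith [hcvx, hmir, mul_pos hε hε]
    have : (μL + μS) / γ ≤ 4 := by rw [add_div, ← ha_def, ← hb_def]; exact hab4
    linarith [(div_le_iff₀ hγ).mp this]
  · -- sufficiency
    intro hle
    have hab4 : a + b ≤ 4 := by
      rw [ha_def, hb_def, ← add_div]
      exact (div_le_iff₀ hγ).mpr (by linarith)
    refine ⟨convex_univ, fun x _ y _ s t hs ht hst => ?_⟩
    set X := x.1 + x.2 with hX
    set X' := y.1 + y.2 with hX'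
    have hmixX : (s • x + t • y).1 + (s • x + t • y).2 = s • X + t • X' := by
      simp only [Prod.fst_add, Prod.snd_add, Prod.smul_fst, Prod.smul_snd, hX, hX']
      module
    have hAeq : s • X + t • X' - Y = s • (X - Y) + t • (X' - Y) := by
      match_scalars <;> linarith
    have hA : frobSq (s • X + t • X' - Y)
        = s * frobSq (X - Y) + t * frobSq (X' - Y) - s * t * frobSq (X - X') := by
      rw [hAeq, frobSq_combo s t hst]
      rw [show (X - Y) - (X' - Y) = X - X' by abel]
    have hφmix : ∀ q, phiF Ψ a b (s • X + t • X') q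
        = s * phiF Ψ a b X q + t * phiF Ψ a b X' q
          - s * t * ((a + b) / 8) * frobSq (X - X') := by
      intro q
      have h1 : (2:ℝ)⁻¹ • (s • X + t • X') - q.1
          = s • ((2:ℝ)⁻¹ • X - q.1) + t • ((2:ℝ)⁻¹ • X' - q.1) := by
        match_scalars <;> linarith
      have h2 : (2:ℝ)⁻¹ • (s • X + t • X') - q.2
          = s • ((2:ℝ)⁻¹ • X - q.2) + t • ((2:ℝ)⁻¹ • X' - q.2) := by
        match_scalars <;> linarith
      have h3 : ((2:ℝ)⁻¹ • X - q.1) - ((2:ℝ)⁻¹ • X' - q.1) = (2:ℝ)⁻¹ • (X - X') := by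
        rw [smul_sub]; abel
      have h4 : ((2:ℝ)⁻¹ • X - q.2) - ((2:ℝ)⁻¹ • X' - q.2) = (2:ℝ)⁻¹ • (X - X') := by
        rw [smul_sub]; abel
      unfold phiF
      rw [h1, h2, frobSq_combo s t hst, frobSq_combo s t hst, h3, h4, frobSq_smul]
      linear_combination (-(Ψ q)) * hst
    have hinf : s * (⨅ q, phiF Ψ a b X q) + t * (⨅ q, phiF Ψ a b X' q)
        - s * t * ((a + b) / 8) * frobSq (X - X') ≤ ⨅ q, phiF Ψ a b (s • X + t • X') q := by
      refine le_ciInf fun q => ?_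
      rw [hφmix q]
      have l1 : s * (⨅ q', phiF Ψ a b X q') ≤ s * phiF Ψ a b X q :=
        mul_le_mul_of_nonneg_left (ciInf_le (hbdd X) q) hs
      have l2 : t * (⨅ q', phiF Ψ a b X' q') ≤ t * phiF Ψ a b X' q :=
        mul_le_mul_of_nonneg_left (ciInf_le (hbdd X') q) ht
      linarith
    simp only [smul_eq_mul]
    rw [hmixX, hA, ← hX, ← hX']
    have hD : 0 ≤ frobSq (X - X') := frobSq_nonneg _
    have hst8 : s * t * ((a + b) / 8) * frobSq (X - X')
        ≤ s * t * (1/2) * frobSq (X - X') := by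
      apply mul_le_mul_of_nonneg_right _ hD
      nlinarith [mul_nonneg hs ht]
    linarith [hinf, hst8]
end
end

section
/- In the LiMES setup, if η ≥ ‖D𝓛M₂‖², where ‖·‖ denotes the operator norm, then the function x ↦ Ψ_D^{𝓛}(𝒜₂x) + (η/2)‖x‖² is convex on X; i.e., the LiMES function Ψ_D^{𝓛} ∘ 𝒜₂ is η-weakly convex. -/
open scoped RealInnerProductSpace

noncomputable section

private lemma comb_norm_sq {Z : Type*} [NormedAddCommGroup Z] [InnerProductSpace ℝ Z]
    (a b : ℝ) (hab : a + b = 1) (u w : Z) :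
    a * ‖u‖ ^ 2 + b * ‖w‖ ^ 2 = ‖a • u + b • w‖ ^ 2 + a * b * ‖u - w‖ ^ 2 := by
  have h1 : ‖a • u + b • w‖ ^ 2
      = a ^ 2 * ‖u‖ ^ 2 + 2 * (a * b) * ⟪u, w⟫ + b ^ 2 * ‖w‖ ^ 2 := by
    rw [norm_add_sq_real, real_inner_smul_left, real_inner_smul_right, norm_smul, norm_smul]
    simp only [Real.norm_eq_abs, mul_pow, sq_abs]
    ring
  have h2 : ‖u - w‖ ^ 2 = ‖u‖ ^ 2 - 2 * ⟪u, w⟫ + ‖w‖ ^ 2 := by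
    rw [norm_sub_sq_real]
  rw [h1, h2]
  linear_combination (-(a * ‖u‖ ^ 2 + b * ‖w‖ ^ 2)) * hab

set_option maxHeartbeats 1000000 in
/-- weak convexity of the LiMES function.  In the LiMES setup, if
`η ≥ ‖D𝓛M₂‖²` (operator norm), then `x ↦ Ψ_D^{𝓛}(𝒜₂x) + (η/2)‖x‖²` is convex on `X`
(convexity of this extended-real-valued function expressed via its epigraph); i.e. the
LiMES function `Ψ_D^{𝓛} ∘ 𝒜₂` is `η`-weakly convex. -/
theorem limes_weakly_convex
    {X Z : Type*}
    [NormedAddCommGroup X] [InnerProductSpace ℝ X] [FiniteDimensional ℝ X]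
    [NormedAddCommGroup Z] [InnerProductSpace ℝ Z] [FiniteDimensional ℝ Z]
    (M₂ : X →L[ℝ] Z) (hM₂ : M₂ ≠ 0) (c₂ : Z) (L : Z →L[ℝ] Z) (hL : L ≠ 0)
    (D : Z →L[ℝ] Z) (hDsa : ∀ u v : Z, ⟪D u, v⟫ = ⟪u, D v⟫)
    (hDpd : ∀ z : Z, z ≠ 0 → 0 < ⟪D z, z⟫)
    (Ψ : Z → EReal) (hΨbot : ∀ z, Ψ z ≠ ⊥) (hΨtop : ∃ z, Ψ z ≠ ⊤)
    (hΨlsc : LowerSemicontinuous Ψ)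
    (hΨconv : Convex ℝ {p : Z × ℝ | Ψ p.1 ≤ (p.2 : EReal)})
    (η : ℝ) (hη : ‖D.comp (L.comp M₂)‖ ^ 2 ≤ η) :
    Convex ℝ {p : X × ℝ |
      (Ψ (M₂ p.1 + c₂) -
          ⨅ v : Z, (Ψ v + ((‖D (L (M₂ p.1 + c₂) - v)‖ ^ 2 / 2 : ℝ) : EReal))) +
        ((η / 2 * ‖p.1‖ ^ 2 : ℝ) : EReal) ≤ (p.2 : EReal)} := by
  rintro ⟨x₁, r₁⟩ hp ⟨x₂, r₂⟩ hq a b ha hb hab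
  rcases eq_or_lt_of_le ha with ha0 | ha0
  · have hb1 : b = 1 := by linarith
    simpa [← ha0, hb1] using hq
  rcases eq_or_lt_of_le hb with hb0 | hb0
  · have ha1 : a = 1 := by linarith
    simpa [← hb0, ha1] using hp
  simp only [Set.mem_setOf_eq, Prod.smul_mk, Prod.mk_add_mk, smul_eq_mul] at hp hq ⊢
  obtain ⟨z₀, hz₀⟩ := hΨtop
  set B : X →L[ℝ] Z := D.comp (L.comp M₂) with hB
  -- the infimum is never ⊤
  have hItop : ∀ z : Z,
      (⨅ v : Z, (Ψ v + ((‖D (L z - v)‖ ^ 2 / 2 : ℝ) : EReal))) ≠ ⊤ := by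
    intro z
    have h1 : (⨅ v : Z, (Ψ v + ((‖D (L z - v)‖ ^ 2 / 2 : ℝ) : EReal)))
        ≤ Ψ z₀ + ((‖D (L z - z₀)‖ ^ 2 / 2 : ℝ) : EReal) :=
      iInf_le _ z₀
    exact (h1.trans_lt (EReal.add_lt_top hz₀ (EReal.coe_ne_top _))).ne
  -- extract real values at x₁
  have hI1bot : (⨅ v : Z, (Ψ v + ((‖D (L (M₂ x₁ + c₂) - v)‖ ^ 2 / 2 : ℝ) : EReal))) ≠ ⊥ := by
    intro h
    rw [h, EReal.sub_bot (hΨbot _), EReal.top_add_coe] at hp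
    exact absurd hp (by simp)
  obtain ⟨ι₁, hι₁⟩ : ∃ r : ℝ,
      (⨅ v : Z, (Ψ v + ((‖D (L (M₂ x₁ + c₂) - v)‖ ^ 2 / 2 : ℝ) : EReal))) = (r : EReal) :=
    ⟨_, (EReal.coe_toReal (hItop _) hI1bot).symm⟩
  have hP1top : Ψ (M₂ x₁ + c₂) ≠ ⊤ := by
    intro h
    rw [h, hι₁, EReal.top_sub_coe, EReal.top_add_coe] at hp
    exact absurd hp (by simp)
  obtain ⟨p₁, hp₁⟩ : ∃ r : ℝ, Ψ (M₂ x₁ + c₂) = (r : EReal) :=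
    ⟨_, (EReal.coe_toReal hP1top (hΨbot _)).symm⟩
  rw [hp₁, hι₁, ← EReal.coe_sub, ← EReal.coe_add, EReal.coe_le_coe_iff] at hp
  -- extract real values at x₂
  have hI2bot : (⨅ v : Z, (Ψ v + ((‖D (L (M₂ x₂ + c₂) - v)‖ ^ 2 / 2 : ℝ) : EReal))) ≠ ⊥ := by
    intro h
    rw [h, EReal.sub_bot (hΨbot _), EReal.top_add_coe] at hq
    exact absurd hq (by simp)
  obtain ⟨ι₂, hι₂⟩ : ∃ r : ℝ,
      (⨅ v : Z, (Ψ v + ((‖D (L (M₂ x₂ + c₂) - v)‖ ^ 2 / 2 : ℝ) : EReal))) = (r : EReal) :=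
    ⟨_, (EReal.coe_toReal (hItop _) hI2bot).symm⟩
  have hP2top : Ψ (M₂ x₂ + c₂) ≠ ⊤ := by
    intro h
    rw [h, hι₂, EReal.top_sub_coe, EReal.top_add_coe] at hq
    exact absurd hq (by simp)
  obtain ⟨p₂, hp₂⟩ : ∃ r : ℝ, Ψ (M₂ x₂ + c₂) = (r : EReal) :=
    ⟨_, (EReal.coe_toReal hP2top (hΨbot _)).symm⟩
  rw [hp₂, hι₂, ← EReal.coe_sub, ← EReal.coe_add, EReal.coe_le_coe_iff] at hq
  -- affine map identity
  have hAff : a • (M₂ x₁ + c₂) + b • (M₂ x₂ + c₂) = M₂ (a • x₁ + b • x₂) + c₂ := by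
    simp only [map_add, map_smul, smul_add]
    match_scalars <;> linarith
  -- convexity of the epigraph of Ψ
  have hcc' : Ψ (M₂ (a • x₁ + b • x₂) + c₂) ≤ ((a * p₁ + b * p₂ : ℝ) : EReal) := by
    have hmem₁ : ((M₂ x₁ + c₂, p₁) : Z × ℝ) ∈ {p : Z × ℝ | Ψ p.1 ≤ (p.2 : EReal)} :=
      le_of_eq hp₁
    have hmem₂ : ((M₂ x₂ + c₂, p₂) : Z × ℝ) ∈ {p : Z × ℝ | Ψ p.1 ≤ (p.2 : EReal)} :=
      le_of_eq hp₂
    have h := hΨconv hmem₁ hmem₂ ha hb hab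
    simp only [Set.mem_setOf_eq, Prod.smul_mk, Prod.mk_add_mk, smul_eq_mul] at h
    rwa [hAff, EReal.coe_add] at h
  -- correction constant
  set cc : ℝ := a * b / 2 * ‖B (x₁ - x₂)‖ ^ 2 with hcc_def
  have hBδ : ‖B (x₁ - x₂)‖ ^ 2 ≤ η * ‖x₁ - x₂‖ ^ 2 := by
    have h1 := B.le_opNorm (x₁ - x₂)
    have h2 : ‖B (x₁ - x₂)‖ ^ 2 ≤ (‖B‖ * ‖x₁ - x₂‖) ^ 2 :=
      pow_le_pow_left₀ (norm_nonneg _) h1 2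
    nlinarith [mul_nonneg (by linarith : (0:ℝ) ≤ η - ‖B‖ ^ 2) (sq_nonneg ‖x₁ - x₂‖)]
  have hcc_le : cc ≤ η * (a * b) / 2 * ‖x₁ - x₂‖ ^ 2 := by
    have hab2 : (0:ℝ) ≤ a * b / 2 := by positivity
    have := mul_le_mul_of_nonneg_left hBδ hab2
    rw [hcc_def]; nlinarith [this]
  -- the key per-point inequality for the infimum at the convex combination
  have hkey : ∀ v : Z, ((a * ι₁ + b * ι₂ - cc : ℝ) : EReal)
      ≤ Ψ v + ((‖D (L (M₂ (a • x₁ + b • x₂) + c₂) - v)‖ ^ 2 / 2 : ℝ) : EReal) := by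
    intro v
    rcases eq_or_ne (Ψ v) ⊤ with hv | hv
    · rw [hv, EReal.top_add_coe]; exact le_top
    obtain ⟨ψ, hψ⟩ : ∃ r : ℝ, Ψ v = (r : EReal) :=
      ⟨_, (EReal.coe_toReal hv (hΨbot v)).symm⟩
    have h1 : ι₁ ≤ ψ + ‖D (L (M₂ x₁ + c₂) - v)‖ ^ 2 / 2 := by
      have h := iInf_le
        (fun v : Z => Ψ v + ((‖D (L (M₂ x₁ + c₂) - v)‖ ^ 2 / 2 : ℝ) : EReal)) v
      rw [hι₁, hψ, ← EReal.coe_add] at h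
      exact_mod_cast h
    have h2 : ι₂ ≤ ψ + ‖D (L (M₂ x₂ + c₂) - v)‖ ^ 2 / 2 := by
      have h := iInf_le
        (fun v : Z => Ψ v + ((‖D (L (M₂ x₂ + c₂) - v)‖ ^ 2 / 2 : ℝ) : EReal)) v
      rw [hι₂, hψ, ← EReal.coe_add] at h
      exact_mod_cast h
    have hu : a • (D (L (M₂ x₁ + c₂) - v)) + b • (D (L (M₂ x₂ + c₂) - v))
        = D (L (M₂ (a • x₁ + b • x₂) + c₂) - v) := by
      simp only [map_add, map_smul, map_sub, smul_sub, smul_add]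
      match_scalars <;> linarith
    have hw : D (L (M₂ x₁ + c₂) - v) - D (L (M₂ x₂ + c₂) - v) = B (x₁ - x₂) := by
      simp only [hB, ContinuousLinearMap.comp_apply, map_add, map_sub]
      abel
    have hid := comb_norm_sq a b hab (D (L (M₂ x₁ + c₂) - v)) (D (L (M₂ x₂ + c₂) - v))
    rw [hu, hw] at hid
    have hquad : a * (‖D (L (M₂ x₁ + c₂) - v)‖ ^ 2 / 2)
        + b * (‖D (L (M₂ x₂ + c₂) - v)‖ ^ 2 / 2)
        = ‖D (L (M₂ (a • x₁ + b • x₂) + c₂) - v)‖ ^ 2 / 2 + cc := by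
      rw [hcc_def]; linarith [hid]
    have e1 := mul_le_mul_of_nonneg_left h1 ha
    have e2 := mul_le_mul_of_nonneg_left h2 hb
    have h3 : a * (ψ + ‖D (L (M₂ x₁ + c₂) - v)‖ ^ 2 / 2)
        + b * (ψ + ‖D (L (M₂ x₂ + c₂) - v)‖ ^ 2 / 2)
        = ψ + ‖D (L (M₂ (a • x₁ + b • x₂) + c₂) - v)‖ ^ 2 / 2 + cc := by
      linear_combination ψ * hab + hquad
    rw [hψ, ← EReal.coe_add, EReal.coe_le_coe_iff]
    linarith [e1, e2, h3]
  have hIx : ((a * ι₁ + b * ι₂ - cc : ℝ) : EReal)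
      ≤ ⨅ v : Z, (Ψ v + ((‖D (L (M₂ (a • x₁ + b • x₂) + c₂) - v)‖ ^ 2 / 2 : ℝ) : EReal)) :=
    le_iInf hkey
  have hIxbot : (⨅ v : Z,
      (Ψ v + ((‖D (L (M₂ (a • x₁ + b • x₂) + c₂) - v)‖ ^ 2 / 2 : ℝ) : EReal))) ≠ ⊥ := by
    intro h
    rw [h, le_bot_iff] at hIx
    exact EReal.coe_ne_bot _ hIx
  obtain ⟨ι, hι⟩ : ∃ r : ℝ, (⨅ v : Z,
      (Ψ v + ((‖D (L (M₂ (a • x₁ + b • x₂) + c₂) - v)‖ ^ 2 / 2 : ℝ) : EReal))) = (r : EReal) :=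
    ⟨_, (EReal.coe_toReal (hItop _) hIxbot).symm⟩
  have hι' : a * ι₁ + b * ι₂ - cc ≤ ι := by
    rw [hι] at hIx; exact_mod_cast hIx
  rw [hι]
  -- final chain
  have step1 : Ψ (M₂ (a • x₁ + b • x₂) + c₂) - (ι : EReal)
      ≤ ((a * p₁ + b * p₂ : ℝ) : EReal) - (ι : EReal) :=
    EReal.sub_le_sub hcc' le_rfl
  have step2 : Ψ (M₂ (a • x₁ + b • x₂) + c₂) - (ι : EReal)
        + ((η / 2 * ‖a • x₁ + b • x₂‖ ^ 2 : ℝ) : EReal)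
      ≤ ((a * p₁ + b * p₂ - ι + η / 2 * ‖a • x₁ + b • x₂‖ ^ 2 : ℝ) : EReal) := by
    rw [EReal.coe_add, EReal.coe_sub]
    exact add_le_add_left step1 _
  refine step2.trans ?_
  rw [EReal.coe_le_coe_iff]
  -- real arithmetic
  have hid := comb_norm_sq a b hab x₁ x₂
  have id2 : η / 2 * ‖a • x₁ + b • x₂‖ ^ 2
      = η / 2 * (a * ‖x₁‖ ^ 2) + η / 2 * (b * ‖x₂‖ ^ 2) - η / 2 * (a * b * ‖x₁ - x₂‖ ^ 2) := by
    linear_combination (-(η / 2)) * hid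
  have e1 := mul_le_mul_of_nonneg_left hp ha
  have e2 := mul_le_mul_of_nonneg_left hq hb
  have hcc2 : η * (a * b) / 2 * ‖x₁ - x₂‖ ^ 2 = η / 2 * (a * b * ‖x₁ - x₂‖ ^ 2) := by ring
  rw [hcc2] at hcc_le
  nlinarith [e1, e2, hι', hcc_le, id2]
end
end

section
/- Let Z be a finite-dimensional real Hilbert space, Ψ : Z → (−∞,+∞] proper lower-semicontinuous convex, D : Z → Z a self-adjoint positive-definite (hence invertible) linear map, and 𝓛 : Z → Z a bounded linear map. Then for every z ∈ Z, Ψ_D^{𝓛}(z) = Ψ(z) − ½‖D𝓛z‖² + inf_{w∈Z} [ Ψ*(Dw) + ½‖D𝓛z − w‖² ], where Ψ*(u) := sup_{v∈Z} ( ⟨u, v⟩ − Ψ(v) ) is the Fenchel conjugate of Ψ. -/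
open scoped RealInnerProductSpace

noncomputable section

lemma lsc_exists_min {β : Type*} [TopologicalSpace β] {s : Set β} (hs : IsCompact s)
    (hne : s.Nonempty) {f : β → EReal} (hf : LowerSemicontinuous f) :
    ∃ p ∈ s, ∀ v ∈ s, f p ≤ f v := by
  by_contra h
  push_neg at h
  have cover : s ⊆ ⋃ v ∈ s, f ⁻¹' Set.Ioi (f v) := by
    intro x hx
    obtain ⟨v, hv, hlt⟩ := h x hx
    exact Set.mem_biUnion hv hlt
  obtain ⟨t, hts, htfin, hcov⟩ := hs.elim_finite_subcover_image
    (fun v _ => hf.isOpen_preimage (f v)) cover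
  obtain ⟨x0, hx0⟩ := hne
  classical
  have hx0' := hcov hx0
  simp only [Set.mem_iUnion] at hx0'
  obtain ⟨v0, hv0t, _⟩ := hx0'
  obtain ⟨m, hmt, hmin⟩ := htfin.toFinset.exists_min_image f
    ⟨v0, htfin.mem_toFinset.2 hv0t⟩
  have hms : m ∈ s := hts (htfin.mem_toFinset.1 hmt)
  have := hcov hms
  simp only [Set.mem_iUnion] at this
  obtain ⟨w, hwt, hlt⟩ := this
  exact absurd (hmin w (htfin.mem_toFinset.2 hwt)) (not_le.2 hlt)

lemma epigraph_closed {β : Type*} [TopologicalSpace β] {Ψ : β → EReal}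
    (h : LowerSemicontinuous Ψ) : IsClosed {p : β × ℝ | Ψ p.1 ≤ (p.2 : EReal)} := by
  rw [← isOpen_compl_iff, isOpen_iff_mem_nhds]
  rintro ⟨v, r⟩ hvr
  simp only [Set.mem_compl_iff, Set.mem_setOf_eq, not_le] at hvr
  obtain ⟨c, hrc, hcΨ⟩ := EReal.exists_between_coe_real hvr
  have hrc' : r < c := by exact_mod_cast hrc
  have h1 : {v' | (c : EReal) < Ψ v'} ∈ nhds v := h v c hcΨ
  have h2 : Set.Iio c ∈ nhds r := Iio_mem_nhds hrc'
  have hmem : {p : β × ℝ | (c : EReal) < Ψ p.1 ∧ p.2 < c} ∈ nhds (v, r) := by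
    rw [nhds_prod_eq]
    exact Filter.prod_mem_prod h1 h2
  refine Filter.mem_of_superset hmem ?_
  rintro ⟨v', r'⟩ ⟨h1', h2'⟩
  simp only [Set.mem_compl_iff, Set.mem_setOf_eq, not_le]
  exact lt_trans (by exact_mod_cast h2') h1'

lemma affine_minorant {Z : Type*} [NormedAddCommGroup Z] [NormedSpace ℝ Z]
    {Ψ : Z → EReal} (hΨbot : ∀ z, Ψ z ≠ ⊥) (hΨtop : ∃ z, Ψ z ≠ ⊤)
    (hΨconv : Convex ℝ {p : Z × ℝ | Ψ p.1 ≤ (p.2 : EReal)})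
    (hE : IsClosed {p : Z × ℝ | Ψ p.1 ≤ (p.2 : EReal)}) :
    ∃ (ℓ : Z →L[ℝ] ℝ) (d : ℝ), ∀ v, ((ℓ v + d : ℝ) : EReal) ≤ Ψ v := by
  obtain ⟨v0, hv0⟩ := hΨtop
  set ψ0 : ℝ := (Ψ v0).toReal with hψ0
  have hv0eq : (ψ0 : EReal) = Ψ v0 := EReal.coe_toReal hv0 (hΨbot v0)
  have hnotmem : (v0, ψ0 - 1) ∉ {p : Z × ℝ | Ψ p.1 ≤ (p.2 : EReal)} := by
    simp only [Set.mem_setOf_eq, not_le, ← hv0eq]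
    exact_mod_cast sub_one_lt ψ0
  obtain ⟨f, u, hfu, hfE⟩ := geometric_hahn_banach_point_closed hΨconv hE hnotmem
  set β : ℝ := f (0, 1) with hβ
  have hsplit : ∀ (v : Z) (r : ℝ), f (v, r) = f (v, 0) + r * β := by
    intro v r
    have h : (v, r) = (v, (0:ℝ)) + r • ((0:Z), (1:ℝ)) := by
      simp [Prod.ext_iff]
    rw [h, map_add, map_smul]
    simp [mul_comm, hβ]
  have hmem0 : (v0, ψ0) ∈ {p : Z × ℝ | Ψ p.1 ≤ (p.2 : EReal)} := by
    simp only [Set.mem_setOf_eq, ← hv0eq]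
    exact le_refl _
  have h1 : u < f (v0, ψ0) := hfE _ hmem0
  have h2 : f (v0, ψ0 - 1) < u := hfu
  have hβpos : 0 < β := by
    rw [hsplit] at h1 h2
    nlinarith
  refine ⟨(-(1/β)) • (f.comp (ContinuousLinearMap.inl ℝ Z ℝ)), u / β, ?_⟩
  intro v
  by_cases hvt : Ψ v = ⊤
  · rw [hvt]; exact le_top
  · have hveq : ((Ψ v).toReal : EReal) = Ψ v := EReal.coe_toReal hvt (hΨbot v)
    rw [← hveq]
    have hmem : (v, (Ψ v).toReal) ∈ {p : Z × ℝ | Ψ p.1 ≤ (p.2 : EReal)} := by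
      simp only [Set.mem_setOf_eq, hveq]
      exact le_refl _
    have h3 : u < f (v, (Ψ v).toReal) := hfE _ hmem
    rw [hsplit] at h3
    rw [EReal.coe_le_coe_iff]
    simp only [ContinuousLinearMap.smul_apply, ContinuousLinearMap.comp_apply,
      ContinuousLinearMap.inl_apply, smul_eq_mul]
    have heq : -(1/β) * f (v, 0) + u/β = (u - f (v, 0))/β := by ring
    rw [heq, div_le_iff₀ hβpos]
    linarith

lemma ereal_sub_shift (y : EReal) (r c : ℝ) :
    y - (r : EReal) = y - (c : EReal) + ((c - r : ℝ) : EReal) := by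
  induction y using EReal.rec with
  | bot => simp [EReal.bot_sub, EReal.bot_add]
  | coe a =>
      rw [← EReal.coe_sub, ← EReal.coe_sub, ← EReal.coe_add, EReal.coe_eq_coe_iff]
      ring
  | top => rw [EReal.top_sub_coe, EReal.top_sub_coe, EReal.top_add_coe]

lemma norm_bound {Z : Type*} [NormedAddCommGroup Z] [InnerProductSpace ℝ Z]
    [FiniteDimensional ℝ Z] (D : Z →ₗ[ℝ] Z)
    (hDpd : ∀ z : Z, z ≠ 0 → 0 < ⟪D z, z⟫) :
    ∃ C : ℝ, 0 < C ∧ ∀ u : Z, ‖u‖ ≤ C * ‖D u‖ := by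
  have hinj : Function.Injective D := by
    rw [← LinearMap.ker_eq_bot, LinearMap.ker_eq_bot']
    intro m hm
    by_contra hm0
    have := hDpd m hm0
    rw [hm, inner_zero_left] at this
    exact lt_irrefl 0 this
  have hbij : Function.Bijective D :=
    ⟨hinj, (LinearMap.injective_iff_surjective).1 hinj⟩
  set e := LinearEquiv.ofBijective D hbij with he
  set G := LinearMap.toContinuousLinearMap (e.symm : Z →ₗ[ℝ] Z) with hG
  refine ⟨‖G‖ + 1, by positivity, fun u => ?_⟩
  have h1 : G (D u) = u := by
    show e.symm (D u) = u
    have : D u = e u := rfl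
    rw [this, LinearEquiv.symm_apply_apply]
  calc ‖u‖ = ‖G (D u)‖ := by rw [h1]
    _ ≤ ‖G‖ * ‖D u‖ := G.le_opNorm _
    _ ≤ (‖G‖ + 1) * ‖D u‖ := by nlinarith [norm_nonneg (D u), norm_nonneg G]

set_option maxHeartbeats 2000000

/-- identity (10) of the paper.  For a proper l.s.c. convex seed
function `Ψ`, a self-adjoint positive-definite `D` and a bounded linear `𝓛`, the LiMES
function satisfies
`Ψ_D^{𝓛}(z) = Ψ(z) − ½‖D𝓛z‖² + inf_w [Ψ*(Dw) + ½‖D𝓛z − w‖²]`,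
where `Ψ*` is the Fenchel conjugate of `Ψ`. -/
theorem limes_moreau_identity
    {Z : Type*} [NormedAddCommGroup Z] [InnerProductSpace ℝ Z] [FiniteDimensional ℝ Z]
    (Ψ : Z → EReal) (hΨbot : ∀ z, Ψ z ≠ ⊥) (hΨtop : ∃ z, Ψ z ≠ ⊤)
    (hΨlsc : LowerSemicontinuous Ψ)
    (hΨconv : Convex ℝ {p : Z × ℝ | Ψ p.1 ≤ (p.2 : EReal)})
    (D : Z →ₗ[ℝ] Z) (hDsa : ∀ u v : Z, ⟪D u, v⟫ = ⟪u, D v⟫)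
    (hDpd : ∀ z : Z, z ≠ 0 → 0 < ⟪D z, z⟫)
    (L : Z →ₗ[ℝ] Z) :
    ∀ z : Z,
      Ψ z - ⨅ v : Z, (Ψ v + ((‖D (L z - v)‖ ^ 2 / 2 : ℝ) : EReal))
        = Ψ z - ((‖D (L z)‖ ^ 2 / 2 : ℝ) : EReal) +
            ⨅ w : Z,
              ((⨆ v : Z, (((⟪D w, v⟫ : ℝ) : EReal) - Ψ v)) +
                ((‖D (L z) - w‖ ^ 2 / 2 : ℝ) : EReal)) := by
  intro z
  obtain ⟨C, hCpos, hCb⟩ := norm_bound D hDpd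
  have hEclosed := epigraph_closed hΨlsc
  obtain ⟨ℓ, d, hld⟩ := affine_minorant hΨbot hΨtop hΨconv hEclosed
  set x : Z := L z with hx
  have hDc : Continuous (D : Z → Z) := D.continuous_of_finiteDimensional
  have hqc : Continuous (fun v : Z => ‖D (x - v)‖ ^ 2 / 2) :=
    ((hDc.comp (continuous_const.sub continuous_id)).norm.pow 2).div_const 2
  set φ : Z → EReal := fun v => Ψ v + ((‖D (x - v)‖ ^ 2 / 2 : ℝ) : EReal) with hφ
  have hφlsc : LowerSemicontinuous φ := by
    apply hΨlsc.add' (continuous_coe_real_ereal.comp hqc).lowerSemicontinuous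
    intro v
    apply EReal.continuousAt_add
    · exact Or.inr (EReal.coe_ne_bot _)
    · exact Or.inr (EReal.coe_ne_top _)
  obtain ⟨v0, hv0⟩ := hΨtop
  have hv0eq : (((Ψ v0).toReal : ℝ) : EReal) = Ψ v0 := EReal.coe_toReal hv0 (hΨbot v0)
  set M : ℝ := (Ψ v0).toReal + ‖D (x - v0)‖ ^ 2 / 2 with hM
  have hφv0 : φ v0 = (M : EReal) := by
    rw [hφ]
    simp only
    rw [hM, EReal.coe_add, hv0eq]
  set c : ℝ := 1 / (2 * C ^ 2) with hc
  have hcpos : 0 < c := by rw [hc]; positivity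
  -- affine + quadratic lower bound for φ
  have hlow : ∀ v : Z, ((ℓ v + d + c * ‖x - v‖ ^ 2 : ℝ) : EReal) ≤ φ v := by
    intro v
    have hb := hCb (x - v)
    have h3 : ‖x - v‖ ^ 2 ≤ C ^ 2 * ‖D (x - v)‖ ^ 2 := by
      nlinarith [norm_nonneg (x - v), norm_nonneg (D (x - v))]
    have hfld : c * (C ^ 2 * ‖D (x - v)‖ ^ 2) = ‖D (x - v)‖ ^ 2 / 2 := by
      rw [hc]; field_simp
    have h2 : c * ‖x - v‖ ^ 2 ≤ ‖D (x - v)‖ ^ 2 / 2 := by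
      nlinarith [mul_le_mul_of_nonneg_left h3 hcpos.le]
    calc ((ℓ v + d + c * ‖x - v‖ ^ 2 : ℝ) : EReal)
        = ((ℓ v + d : ℝ) : EReal) + ((c * ‖x - v‖ ^ 2 : ℝ) : EReal) := by
          rw [← EReal.coe_add]
      _ ≤ Ψ v + ((‖D (x - v)‖ ^ 2 / 2 : ℝ) : EReal) :=
          add_le_add (hld v) (EReal.coe_le_coe_iff.2 h2)
  set L0 : ℝ := ‖ℓ‖ with hL0
  have hL0n : 0 ≤ L0 := norm_nonneg ℓ
  set K : ℝ := L0 * ‖x‖ + |M| + 1 + |d| with hK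
  have hK0 : 0 ≤ K := by
    rw [hK]; positivity
  set R : ℝ := max (‖x‖ + ((L0 + K) / c + 1)) ‖v0‖ with hR
  have houtside : ∀ v : Z, R < ‖v‖ → (M : EReal) ≤ φ v := by
    intro v hv
    refine le_trans ?_ (hlow v)
    rw [EReal.coe_le_coe_iff]
    have hs : (L0 + K) / c + 1 ≤ ‖v‖ - ‖x‖ := by
      have h4 : ‖x‖ + ((L0 + K) / c + 1) ≤ R := le_max_left _ _
      linarith
    have hn : ‖v‖ - ‖x‖ ≤ ‖x - v‖ := by
      calc ‖v‖ - ‖x‖ ≤ |‖v‖ - ‖x‖| := le_abs_self _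
        _ ≤ ‖v - x‖ := abs_norm_sub_norm_le v x
        _ = ‖x - v‖ := norm_sub_rev v x
    have hs0 : 0 < ‖v‖ - ‖x‖ := by
      have : (0:ℝ) < (L0 + K) / c + 1 := by positivity
      linarith
    have hlv : -(L0 * ‖v‖) ≤ ℓ v := by
      have h5 : ‖ℓ v‖ ≤ L0 * ‖v‖ := ℓ.le_opNorm v
      rw [Real.norm_eq_abs] at h5
      cases abs_le.1 h5 with
      | intro hl hr => linarith
    have hcs : L0 + K + c ≤ c * (‖v‖ - ‖x‖) := by
      have e1 : c * ((L0 + K) / c + 1) = L0 + K + c := by field_simp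
      nlinarith [mul_le_mul_of_nonneg_left hs hcpos.le]
    have key : (L0 + K + c) * (‖v‖ - ‖x‖) ≤ c * ‖x - v‖ ^ 2 := by
      nlinarith [mul_le_mul hn hn hs0.le (le_trans hs0.le hn),
        mul_le_mul_of_nonneg_right hcs hs0.le]
    have hs1 : 1 ≤ ‖v‖ - ‖x‖ := by
      have : (0:ℝ) ≤ (L0 + K) / c := by positivity
      linarith
    nlinarith [mul_nonneg hK0 (by linarith : (0:ℝ) ≤ ‖v‖ - ‖x‖ - 1),
      mul_nonneg hcpos.le hs0.le, le_abs_self M, neg_abs_le d,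
      mul_nonneg hL0n (norm_nonneg x)]
  -- minimizer on the closed ball
  have hv0R : v0 ∈ Metric.closedBall (0 : Z) R := by
    rw [Metric.mem_closedBall, dist_zero_right]
    exact le_max_right _ _
  obtain ⟨p, hpball, hpmin'⟩ := lsc_exists_min (isCompact_closedBall (0:Z) R)
    ⟨v0, hv0R⟩ hφlsc
  have hpmin : ∀ v, φ p ≤ φ v := by
    intro v
    by_cases hvb : v ∈ Metric.closedBall (0 : Z) R
    · exact hpmin' v hvb
    · have hv : R < ‖v‖ := by
        rw [Metric.mem_closedBall, dist_zero_right, not_le] at hvb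
        exact hvb
      exact le_trans (le_trans (hpmin' v0 hv0R) (le_of_eq hφv0)) (houtside v hv)
  have hφpM : φ p ≤ (M : EReal) := hφv0 ▸ hpmin' v0 hv0R
  have hΨptop : Ψ p ≠ ⊤ := by
    intro h
    have hφt : φ p = ⊤ := by rw [hφ]; simp [h]
    rw [hφt] at hφpM
    exact absurd hφpM (by simp)
  set ψp : ℝ := (Ψ p).toReal with hψp
  have hpeq : (ψp : EReal) = Ψ p := EReal.coe_toReal hΨptop (hΨbot p)
  set qp : ℝ := ‖D (x - p)‖ ^ 2 / 2 with hqp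
  have hφpeq : φ p = ((ψp + qp : ℝ) : EReal) := by
    rw [hφ]; simp only; rw [EReal.coe_add, hpeq]
  -- subgradient inequality at p
  have hgrad : ∀ v : Z, Ψ v ≠ ⊤ →
      ψp + ⟪D (x - p), D (v - p)⟫ ≤ (Ψ v).toReal := by
    intro v hvt
    set r : ℝ := (Ψ v).toReal with hr
    have hveq : (r : EReal) = Ψ v := EReal.coe_toReal hvt (hΨbot v)
    have hstep : ∀ t : ℝ, 0 < t → t ≤ 1 →
        ψp + ⟪D (x - p), D (v - p)⟫ - t * ‖D (v - p)‖ ^ 2 / 2 ≤ r := by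
      intro t ht0 ht1
      have hmemp : (p, ψp) ∈ {q : Z × ℝ | Ψ q.1 ≤ (q.2 : EReal)} := by
        simp only [Set.mem_setOf_eq, hpeq]; exact le_refl _
      have hmemv : (v, r) ∈ {q : Z × ℝ | Ψ q.1 ≤ (q.2 : EReal)} := by
        simp only [Set.mem_setOf_eq, hveq]; exact le_refl _
      have hconv := hΨconv hmemp hmemv (by linarith : (0:ℝ) ≤ 1 - t) ht0.le
        (by ring : (1 - t) + t = 1)
      have hc2 : Ψ ((1 - t) • p + t • v) ≤ (((1 - t) * ψp + t * r : ℝ) : EReal) := by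
        simpa [Prod.smul_mk, Prod.mk_add_mk, smul_eq_mul] using hconv
      set vt : Z := (1 - t) • p + t • v with hvt'
      have hminle := hpmin vt
      have hle : ((ψp + qp : ℝ) : EReal)
          ≤ (((1 - t) * ψp + t * r + ‖D (x - vt)‖ ^ 2 / 2 : ℝ) : EReal) := by
        rw [← hφpeq]
        refine le_trans hminle ?_
        rw [hφ]
        simp only
        calc Ψ vt + ((‖D (x - vt)‖ ^ 2 / 2 : ℝ) : EReal)
            ≤ (((1 - t) * ψp + t * r : ℝ) : EReal) + ((‖D (x - vt)‖ ^ 2 / 2 : ℝ) : EReal) :=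
              add_le_add_left hc2 _
          _ = (((1 - t) * ψp + t * r + ‖D (x - vt)‖ ^ 2 / 2 : ℝ) : EReal) :=
              (EReal.coe_add _ _).symm
      rw [EReal.coe_le_coe_iff] at hle
      have hxvt : x - vt = (x - p) - t • (v - p) := by
        rw [hvt']
        module
      have hDxvt : D (x - vt) = D (x - p) - t • D (v - p) := by
        rw [hxvt, map_sub, map_smul]
      have h5 : ‖D (x - vt)‖ ^ 2 = ‖D (x - p)‖ ^ 2 - 2 * ⟪D (x - p), t • D (v - p)⟫
          + ‖t • D (v - p)‖ ^ 2 := by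
        rw [hDxvt]; exact norm_sub_sq_real _ _
      have h6 : ⟪D (x - p), t • D (v - p)⟫ = t * ⟪D (x - p), D (v - p)⟫ :=
        real_inner_smul_right _ _ _
      have h7 : ‖t • D (v - p)‖ ^ 2 = t ^ 2 * ‖D (v - p)‖ ^ 2 := by
        rw [norm_smul, mul_pow, Real.norm_eq_abs, sq_abs]
      have h8 : t * (⟪D (x - p), D (v - p)⟫ - t * ‖D (v - p)‖ ^ 2 / 2)
          ≤ t * (r - ψp) := by
        rw [h5, h6, h7] at hle
        rw [hqp] at hle
        nlinarith [hle]
      have h9 := (mul_le_mul_iff_right₀ ht0).1 h8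
      linarith
    by_contra hcon
    push_neg at hcon
    set B2 : ℝ := ‖D (v - p)‖ ^ 2 with hB2'
    have hB2 : 0 ≤ B2 := by rw [hB2']; positivity
    set ε : ℝ := ψp + ⟪D (x - p), D (v - p)⟫ - r with hε
    have hεpos : 0 < ε := by rw [hε]; linarith
    have htpos : 0 < min 1 (ε / (B2 + 1)) := by
      apply lt_min one_pos
      positivity
    have ht := hstep (min 1 (ε / (B2 + 1))) htpos (min_le_left _ _)
    have hbd : min 1 (ε / (B2 + 1)) * B2 ≤ ε := by
      have h9 : min 1 (ε / (B2 + 1)) ≤ ε / (B2 + 1) := min_le_right _ _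
      have h10 : ε / (B2 + 1) * B2 ≤ ε := by
        rw [div_mul_eq_mul_div, div_le_iff₀ (by positivity)]
        nlinarith
      nlinarith [mul_le_mul_of_nonneg_right h9 hB2]
    rw [hε] at hbd
    linarith
  -- rewrite the inner product
  have hinner : ∀ v : Z, ⟪D (x - p), D (v - p)⟫
      = ⟪D (D (x - p)), v⟫ - ⟪D (D (x - p)), p⟫ := by
    intro v
    rw [← hDsa (D (x - p)) (v - p), inner_sub_right]
  set w0 : Z := D (x - p) with hw0
  -- value of the conjugate at D w0
  have hSw0 : (⨆ v : Z, (((⟪D w0, v⟫ : ℝ) : EReal) - Ψ v))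
      = ((⟪D w0, p⟫ - ψp : ℝ) : EReal) := by
    apply le_antisymm
    · apply iSup_le
      intro v
      by_cases hvt : Ψ v = ⊤
      · rw [hvt, EReal.sub_top]; exact bot_le
      · have hveq : (((Ψ v).toReal : ℝ) : EReal) = Ψ v := EReal.coe_toReal hvt (hΨbot v)
        rw [← hveq, ← EReal.coe_sub, EReal.coe_le_coe_iff]
        have h10 := hgrad v hvt
        rw [hinner v] at h10
        linarith
    · have heq2 : ((⟪D w0, p⟫ - ψp : ℝ) : EReal)
          = ((⟪D w0, p⟫ : ℝ) : EReal) - Ψ p := by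
        rw [← hpeq, ← EReal.coe_sub]
      rw [heq2]
      exact le_iSup (fun v => (((⟪D w0, v⟫ : ℝ) : EReal) - Ψ v)) p
  -- value of the first infimum
  have hA : (⨅ v : Z, (Ψ v + ((‖D (x - v)‖ ^ 2 / 2 : ℝ) : EReal)))
      = ((ψp + qp : ℝ) : EReal) := by
    apply le_antisymm
    · rw [← hφpeq]
      exact iInf_le (fun v => Ψ v + ((‖D (x - v)‖ ^ 2 / 2 : ℝ) : EReal)) p
    · exact le_iInf fun v => hφpeq ▸ hpmin v
  set C2 : ℝ := ‖D x‖ ^ 2 / 2 with hC2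
  -- value of the second infimum
  have hB : (⨅ w : Z, ((⨆ v : Z, (((⟪D w, v⟫ : ℝ) : EReal) - Ψ v)) +
        ((‖D x - w‖ ^ 2 / 2 : ℝ) : EReal)))
      = ((C2 - (ψp + qp) : ℝ) : EReal) := by
    have hae : D (x - p) = D x - D p := map_sub D x p
    apply le_antisymm
    · refine le_trans (iInf_le _ w0) ?_
      rw [hSw0, ← EReal.coe_add, EReal.coe_le_coe_iff]
      have hw0e : D x - w0 = D p := by
        rw [hw0, hae]; abel
      rw [hw0e]
      have hip : ⟪D w0, p⟫ = ⟪D x, D p⟫ - ‖D p‖ ^ 2 := by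
        rw [hDsa w0 p, hw0, hae, inner_sub_left, real_inner_self_eq_norm_sq]
      have hqpe : qp = (‖D x‖ ^ 2 - 2 * ⟪D x, D p⟫ + ‖D p‖ ^ 2) / 2 := by
        rw [hqp, hw0, hae, norm_sub_sq_real]
      rw [hip, hqpe, hC2]
      ring_nf
      linarith
    · refine le_iInf fun w => ?_
      have h1 : ((⟪D w, p⟫ - ψp : ℝ) : EReal)
          ≤ ⨆ v : Z, (((⟪D w, v⟫ : ℝ) : EReal) - Ψ v) := by
        have : ((⟪D w, p⟫ - ψp : ℝ) : EReal) = ((⟪D w, p⟫ : ℝ) : EReal) - Ψ p := by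
          rw [← hpeq, ← EReal.coe_sub]
        rw [this]
        exact le_iSup (fun v => (((⟪D w, v⟫ : ℝ) : EReal) - Ψ v)) p
      refine le_trans ?_ (add_le_add_left h1 _)
      rw [← EReal.coe_add, EReal.coe_le_coe_iff]
      have hip : ⟪D w, p⟫ = ⟪w, D p⟫ := hDsa w p
      have e1 : ‖D x - w‖ ^ 2 = ‖D x‖ ^ 2 - 2 * ⟪D x, w⟫ + ‖w‖ ^ 2 :=
        norm_sub_sq_real _ _
      have e2 : ‖D x - D p - w‖ ^ 2 = ‖D x - D p‖ ^ 2 - 2 * ⟪D x - D p, w⟫ + ‖w‖ ^ 2 :=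
        norm_sub_sq_real _ _
      have e3 : ⟪D x - D p, w⟫ = ⟪D x, w⟫ - ⟪D p, w⟫ := inner_sub_left _ _ _
      have e4 : ⟪w, D p⟫ = ⟪D p, w⟫ := real_inner_comm _ _
      have e5 : (0:ℝ) ≤ ‖D x - D p - w‖ ^ 2 := by positivity
      have hqpe : qp = ‖D x - D p‖ ^ 2 / 2 := by rw [hqp, hw0, hae]
      rw [hip, hC2, hqpe, e4]
      linarith
  -- assemble
  rw [hA, hB, ereal_sub_shift (Ψ z) (ψp + qp) C2]
end
end
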